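/- arXiv:1503.02746 — 2 statements merged into one kernel-verified Lean document; each statement's English description precedes it below -/
import Mathlib

section
/- Let G be a sub-amply regular graph with parameters (n, k, λ, μ) which is not a disjoint union of cliques. Then λ + 1 < max{ 4·√(2n), (6/(√13 − 1))·√(k·(μ − 1)) }. -/
open Finset

/-- A graph is *sub-amply regular* with parameters `(n, k, lam, mu)` if it has `n` vertices,
is regular of degree `k`, adjacent vertices have exactly `lam` common neighbors, and
vertices at distance 2 have at most `mu` common neighbors. -/
def SubAmplyRegular {V : Type*} [Fintype V] [DecidableEq V] (G : SimpleGraph V)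
    [DecidableRel G.Adj] (n k lam mu : ℕ) : Prop :=
  Fintype.card V = n ∧ G.IsRegularOfDegree k ∧
    (∀ u v : V, G.Adj u v → (G.neighborFinset u ∩ G.neighborFinset v).card = lam) ∧
    (∀ u v : V, G.dist u v = 2 → (G.neighborFinset u ∩ G.neighborFinset v).card ≤ mu)

/-- `G` is a disjoint union of cliques: every connected component is a complete graph. -/
def IsDisjointUnionOfCliques {V : Type*} (G : SimpleGraph V) : Prop :=
  ∀ u v : V, G.Reachable u v → u ≠ v → G.Adj u v

namespace BWaux

open SimpleGraph

variable {V : Type*} [Fintype V] [DecidableEq V] (G : SimpleGraph V) [DecidableRel G.Adj]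

/-- The set of common neighbors of `a` and `b`. -/
def cn (a b : V) : Finset V := G.neighborFinset a ∩ G.neighborFinset b

lemma mem_cn {a b x : V} : x ∈ cn G a b ↔ G.Adj a x ∧ G.Adj b x := by
  simp [cn, SimpleGraph.mem_neighborFinset]

/-- The number of non-neighbors of `y` inside `cn a b` (other than `y`). -/
def ED (a b y : V) : ℕ := (((cn G a b).erase y).filter (fun p => ¬ G.Adj y p)).card

/-- Neighbors of `a` that are not equal or adjacent to `b`. -/
def Oset (a b : V) : Finset V := (G.neighborFinset a).filter (fun p => p ≠ b ∧ ¬ G.Adj b p)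

variable (l mu k : ℕ)

def Good (a b : V) : Finset V := (cn G a b).filter (fun y => 2 * ED G a b y + mu ≤ l + 1)

def Bad (a b : V) : Finset V := (cn G a b).filter (fun y => ¬ (2 * ED G a b y + mu ≤ l + 1))

def rel (a x y : V) : Prop :=
  G.Adj a x ∧ G.Adj a y ∧ G.Adj x y ∧ 2 * ED G a x y + mu ≤ l + 1

instance (a x y : V) : Decidable (rel G l mu a x y) :=
  inferInstanceAs (Decidable (_ ∧ _ ∧ _ ∧ _))

def cls (a y : V) : Finset V :=
  (G.neighborFinset a).filter (fun x => x = y ∨ rel G l mu a y x)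

def Reps (a : V) : Finset (Finset V) := (G.neighborFinset a).image (fun y => cls G l mu a y)

/-- generic double counting -/
lemma pair_count {α β : Type*} (s : Finset α) (t : Finset β) (r : α → β → Prop)
    [∀ a b, Decidable (r a b)] :
    ∑ a ∈ s, (t.filter (fun b => r a b)).card = ∑ b ∈ t, (s.filter (fun a => r a b)).card := by
  simp_rw [Finset.card_filter]
  exact Finset.sum_comm

/-- Hypothesis packages (as plain defs to shorten signatures). -/
def HL : Prop := ∀ ⦃x y : V⦄, G.Adj x y → (cn G x y).card = l

def HD : Prop := ∀ a : V, (G.neighborFinset a).card = k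

def HM : Prop := ∀ ⦃x y c : V⦄, x ≠ y → ¬ G.Adj x y → G.Adj x c → G.Adj c y →
  (cn G x y).card ≤ mu

def HB : Prop := ∀ a b : V, G.Adj a b → 2 * (Bad G l mu a b).card + mu ≤ l + 1

variable {G l mu k}

section Counting

/-- splitting the common neighborhood of an edge at a point of it. -/
lemma D_split (hlam : HL G l) {a b y : V} (hab : G.Adj a b) (hy : y ∈ cn G a b) :
    ((cn G a b).filter (fun p => G.Adj y p)).card + ED G a b y + 1 = l := by
  have h1 : ((cn G a b).erase y).card + 1 = (cn G a b).card :=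
    Finset.card_erase_add_one hy
  have h2 : (((cn G a b).erase y).filter (fun p => G.Adj y p)).card
      + (((cn G a b).erase y).filter (fun p => ¬ G.Adj y p)).card
      = ((cn G a b).erase y).card :=
    Finset.card_filter_add_card_filter_not _
  have h3 : ((cn G a b).erase y).filter (fun p => G.Adj y p)
      = (cn G a b).filter (fun p => G.Adj y p) := by
    ext p
    simp only [Finset.mem_filter, Finset.mem_erase]
    constructor
    · rintro ⟨⟨-, hp⟩, hadj⟩; exact ⟨hp, hadj⟩
    · rintro ⟨hp, hadj⟩; exact ⟨⟨(G.ne_of_adj hadj).symm, hp⟩, hadj⟩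
  rw [h3] at h2
  rw [hlam hab] at h1
  unfold ED
  omega

lemma nb_decomp {a b : V} (hab : G.Adj a b) :
    G.neighborFinset a = insert b (cn G a b ∪ Oset G a b) := by
  ext p
  simp only [SimpleGraph.mem_neighborFinset, Finset.mem_insert, Finset.mem_union, mem_cn,
    Oset, Finset.mem_filter]
  constructor
  · intro hp
    by_cases hpb : p = b
    · exact Or.inl hpb
    · by_cases hbp : G.Adj b p
      · exact Or.inr (Or.inl ⟨hp, hbp⟩)
      · exact Or.inr (Or.inr ⟨hp, hpb, hbp⟩)
  · rintro (rfl | ⟨hp, -⟩ | ⟨hp, -, -⟩) <;> first | exact hab | exact hp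

lemma b_not_mem_cnO {a b : V} : b ∉ cn G a b ∪ Oset G a b := by
  simp only [Finset.mem_union, mem_cn, Oset, Finset.mem_filter, not_or]
  exact ⟨fun h => G.irrefl h.2, fun h => h.2.1 rfl⟩

lemma cn_disj_O {a b : V} : Disjoint (cn G a b) (Oset G a b) := by
  rw [Finset.disjoint_left]
  intro p hp hp'
  simp only [mem_cn] at hp
  simp only [Oset, Finset.mem_filter] at hp'
  exact hp'.2.2 hp.2

lemma Oset_card (hlam : HL G l) (hdeg : HD G k) {a b : V} (hab : G.Adj a b) : (Oset G a b).card + (l + 1) = k := by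
  have h := hdeg a
  rw [nb_decomp hab, Finset.card_insert_of_notMem b_not_mem_cnO,
    Finset.card_union_of_disjoint cn_disj_O] at h
  rw [hlam hab] at h
  omega

/-- the `ED` of `y ∈ cn a b` counts its `Oset`-neighbors. -/
lemma ED_out (hlam : HL G l) {a b y : V} (hab : G.Adj a b) (hy : y ∈ cn G a b) :
    ((Oset G a b).filter (fun p => G.Adj y p)).card = ED G a b y := by
  obtain ⟨hay, hby⟩ := (mem_cn G).1 hy
  have hya : (cn G y a).card = l := hlam (G.adj_symm hay)
  have hsplit : ((G.neighborFinset a).filter (fun p => G.Adj y p)).card = l := by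
    rw [← hya]
    congr 1
    ext p
    simp [mem_cn, SimpleGraph.mem_neighborFinset, and_comm]
  rw [nb_decomp hab] at hsplit
  have hb : G.Adj y b := G.adj_symm hby
  rw [Finset.filter_insert, if_pos hb, Finset.filter_union] at hsplit
  have hbnot : b ∉ (cn G a b).filter (fun p => G.Adj y p) ∪
      (Oset G a b).filter (fun p => G.Adj y p) := by
    intro hmem
    exact b_not_mem_cnO (Finset.union_subset_union
      (Finset.filter_subset _ _) (Finset.filter_subset _ _) hmem)
  rw [Finset.card_insert_of_notMem hbnot,
    Finset.card_union_of_disjoint (Finset.disjoint_filter_filter cn_disj_O)] at hsplit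
  have hD := D_split hlam hab hy
  omega

/-- total mass bound: `∑_{y ∈ cn a b} ED y + |Oset| ≤ |Oset| * mu`. -/
lemma mass (hlam : HL G l) (hmu2 : HM G mu) {a b : V} (hab : G.Adj a b) :
    (∑ y ∈ cn G a b, ED G a b y) + (Oset G a b).card ≤ (Oset G a b).card * mu := by
  have hswap : ∑ y ∈ cn G a b, ((Oset G a b).filter (fun p => G.Adj y p)).card
      = ∑ p ∈ Oset G a b, ((cn G a b).filter (fun y => G.Adj y p)).card :=
    pair_count _ _ _
  have h1 : ∑ y ∈ cn G a b, ED G a b y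
      = ∑ y ∈ cn G a b, ((Oset G a b).filter (fun p => G.Adj y p)).card := by
    apply Finset.sum_congr rfl
    intro y hy
    exact (ED_out hlam hab hy).symm
  have h2 : ∀ p ∈ Oset G a b, ((cn G a b).filter (fun y => G.Adj y p)).card + 1 ≤ mu := by
    intro p hp
    simp only [Oset, Finset.mem_filter, SimpleGraph.mem_neighborFinset] at hp
    obtain ⟨hap, hpb, hbp⟩ := hp
    have hsub : insert a ((cn G a b).filter (fun y => G.Adj y p)) ⊆ cn G p b := by
      intro x hx
      rcases Finset.mem_insert.1 hx with rfl | hx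
      · exact (mem_cn G).2 ⟨G.adj_symm hap, G.adj_symm hab⟩
      · obtain ⟨hxcn, hxp⟩ := Finset.mem_filter.1 hx
        exact (mem_cn G).2 ⟨G.adj_symm hxp, ((mem_cn G).1 hxcn).2⟩
    have hanot : a ∉ (cn G a b).filter (fun y => G.Adj y p) := by
      intro ha
      exact G.irrefl ((mem_cn G).1 (Finset.mem_filter.1 ha).1).1
    have hcard := Finset.card_le_card hsub
    rw [Finset.card_insert_of_notMem hanot] at hcard
    have hmub : (cn G p b).card ≤ mu := by
      refine hmu2 hpb (fun h => hbp (G.adj_symm h)) (G.adj_symm hap) hab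
    omega
  rw [h1, hswap]
  calc ∑ p ∈ Oset G a b, ((cn G a b).filter (fun y => G.Adj y p)).card + (Oset G a b).card
      = ∑ p ∈ Oset G a b, (((cn G a b).filter (fun y => G.Adj y p)).card + 1) := by
        rw [Finset.sum_add_distrib, Finset.sum_const, smul_eq_mul, mul_one]
    _ ≤ ∑ _p ∈ Oset G a b, mu := Finset.sum_le_sum h2
    _ = (Oset G a b).card * mu := by rw [Finset.sum_const, smul_eq_mul]

/-- two non-adjacent vertices of `cn a b` have large `ED`-sum. -/
lemma force (hlam : HL G l) (hmu2 : HM G mu) {a b y p : V} (hab : G.Adj a b) (hy : y ∈ cn G a b) (hp : p ∈ cn G a b)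
    (hne : y ≠ p) (hnadj : ¬ G.Adj y p) :
    l + 2 ≤ mu + ED G a b y + ED G a b p := by
  obtain ⟨hay, hby⟩ := (mem_cn G).1 hy
  obtain ⟨hap', hbp'⟩ := (mem_cn G).1 hp
  set A := (cn G a b).filter (fun x => G.Adj y x) with hA
  set B := (cn G a b).filter (fun x => G.Adj p x) with hB
  have hsub : A ∪ B ⊆ ((cn G a b).erase y).erase p := by
    intro x hx
    rcases Finset.mem_union.1 hx with hx | hx
    · obtain ⟨hxcn, hyx⟩ := Finset.mem_filter.1 hx
      refine Finset.mem_erase.2 ⟨?_, Finset.mem_erase.2 ⟨(G.ne_of_adj hyx).symm, hxcn⟩⟩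
      rintro rfl; exact hnadj hyx
    · obtain ⟨hxcn, hpx⟩ := Finset.mem_filter.1 hx
      refine Finset.mem_erase.2 ⟨(G.ne_of_adj hpx).symm, Finset.mem_erase.2 ⟨?_, hxcn⟩⟩
      rintro rfl; exact hnadj (G.adj_symm hpx)
  have hc1 : (((cn G a b).erase y).erase p).card + 2 = l := by
    have e1 : ((cn G a b).erase y).card + 1 = (cn G a b).card := Finset.card_erase_add_one hy
    have hp' : p ∈ (cn G a b).erase y := Finset.mem_erase.2 ⟨fun h => hne h.symm, hp⟩
    have e2 : (((cn G a b).erase y).erase p).card + 1 = ((cn G a b).erase y).card :=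
      Finset.card_erase_add_one hp'
    have e3 := hlam hab
    omega
  have hcu : (A ∪ B).card + 2 ≤ l := by
    have := Finset.card_le_card hsub
    omega
  have hui : (A ∪ B).card + (A ∩ B).card = A.card + B.card :=
    Finset.card_union_add_card_inter _ _
  have hins : insert a (insert b (A ∩ B)) ⊆ cn G y p := by
    intro x hx
    rcases Finset.mem_insert.1 hx with rfl | hx
    · exact (mem_cn G).2 ⟨G.adj_symm hay, G.adj_symm hap'⟩
    rcases Finset.mem_insert.1 hx with rfl | hx
    · exact (mem_cn G).2 ⟨G.adj_symm hby, G.adj_symm hbp'⟩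
    · obtain ⟨hxA, hxB⟩ := Finset.mem_inter.1 hx
      exact (mem_cn G).2 ⟨(Finset.mem_filter.1 hxA).2, (Finset.mem_filter.1 hxB).2⟩
  have hanotin : a ∉ insert b (A ∩ B) := by
    simp only [Finset.mem_insert, Finset.mem_inter, not_or]
    refine ⟨G.ne_of_adj hab, fun hmem => ?_⟩
    have := (Finset.mem_filter.1 hmem.1).1
    exact G.irrefl ((mem_cn G).1 this).1
  have hbnotin : b ∉ A ∩ B := by
    intro hmem
    have := (Finset.mem_filter.1 (Finset.mem_inter.1 hmem).1).1
    exact G.irrefl ((mem_cn G).1 this).2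
  have hci : (A ∩ B).card + 2 ≤ mu := by
    have h1 := Finset.card_le_card hins
    rw [Finset.card_insert_of_notMem hanotin, Finset.card_insert_of_notMem hbnotin] at h1
    have h2 : (cn G y p).card ≤ mu := hmu2 hne hnadj (G.adj_symm hay) hap'
    omega
  have hd1 := D_split hlam hab hy
  have hd2 := D_split hlam hab hp
  rw [← hA] at hd1
  rw [← hB] at hd2
  omega

lemma good_pairwise (hlam : HL G l) (hmu2 : HM G mu) {a b y p : V} (hab : G.Adj a b) (hy : y ∈ cn G a b) (hp : p ∈ cn G a b)
    (hty : 2 * ED G a b y + mu ≤ l + 1) (htp : 2 * ED G a b p + mu ≤ l + 1)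
    (hne : y ≠ p) : G.Adj y p := by
  by_contra hnadj
  have := force hlam hmu2 hab hy hp hne hnadj
  omega

lemma ED_symm (hlam : HL G l) {a x y : V} (hax : G.Adj a x) (hay : G.Adj a y) (hxy : G.Adj x y) :
    ED G a x y = ED G a y x := by
  have hy : y ∈ cn G a x := (mem_cn G).2 ⟨hay, hxy⟩
  have hx : x ∈ cn G a y := (mem_cn G).2 ⟨hax, G.adj_symm hxy⟩
  have h1 := D_split hlam hax hy
  have h2 := D_split hlam hay hx
  have heq : (cn G a x).filter (fun p => G.Adj y p)
      = (cn G a y).filter (fun p => G.Adj x p) := by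
    ext p
    simp only [Finset.mem_filter, mem_cn]
    tauto
  rw [heq] at h1
  omega

lemma rel_symm (hlam : HL G l) {a x y : V} (h : rel G l mu a x y) : rel G l mu a y x := by
  obtain ⟨hax, hay, hxy, ht⟩ := h
  refine ⟨hay, hax, G.adj_symm hxy, ?_⟩
  rwa [← ED_symm hlam hax hay hxy]

lemma Good_Bad_card (hlam : HL G l) {a b : V} (hab : G.Adj a b) :
    (Good G l mu a b).card + (Bad G l mu a b).card = l := by
  rw [← hlam hab]
  exact Finset.card_filter_add_card_filter_not _

lemma Bad_mass (hlam : HL G l) (hmu2 : HM G mu) {a b : V} (hab : G.Adj a b) :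
    (Bad G l mu a b).card * (l + 2) + 2 * (Oset G a b).card
      ≤ (Bad G l mu a b).card * mu + 2 * ((Oset G a b).card * mu) := by
  have h1 : ∀ y ∈ Bad G l mu a b, l + 2 ≤ mu + 2 * ED G a b y := by
    intro y hy
    have := (Finset.mem_filter.1 hy).2
    omega
  have h2 : (Bad G l mu a b).card * (l + 2) ≤ ∑ y ∈ Bad G l mu a b, (mu + 2 * ED G a b y) := by
    calc (Bad G l mu a b).card * (l + 2) = ∑ _y ∈ Bad G l mu a b, (l + 2) := by
          rw [Finset.sum_const, smul_eq_mul]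
      _ ≤ _ := Finset.sum_le_sum h1
  have h3 : ∑ y ∈ Bad G l mu a b, (mu + 2 * ED G a b y)
      = (Bad G l mu a b).card * mu + 2 * ∑ y ∈ Bad G l mu a b, ED G a b y := by
    rw [Finset.sum_add_distrib, Finset.sum_const, smul_eq_mul, Finset.mul_sum]
  have h4 : ∑ y ∈ Bad G l mu a b, ED G a b y ≤ ∑ y ∈ cn G a b, ED G a b y :=
    Finset.sum_le_sum_of_subset (Finset.filter_subset _ _)
  have h5 := mass hlam hmu2 hab
  omega

lemma rel_trans (hlam : HL G l) (hmu2 : HM G mu) (hBS : HB G l mu) {a x y z : V}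
    (h1 : rel G l mu a x y) (h2 : rel G l mu a y z) (hxz : x ≠ z) :
    rel G l mu a x z := by
  obtain ⟨hax, hay, hxy, ht1⟩ := h1
  obtain ⟨-, haz, hyz, ht2⟩ := h2
  have hxmem : x ∈ cn G a y := (mem_cn G).2 ⟨hax, G.adj_symm hxy⟩
  have hzmem : z ∈ cn G a y := (mem_cn G).2 ⟨haz, hyz⟩
  have htx : 2 * ED G a y x + mu ≤ l + 1 := by
    rwa [← ED_symm hlam hax hay hxy]
  have hadjxz : G.Adj x z :=
    good_pairwise hlam hmu2 hay hxmem hzmem htx ht2 hxz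
  refine ⟨hax, haz, hadjxz, ?_⟩
  have hxG : x ∈ Good G l mu a y := Finset.mem_filter.2 ⟨hxmem, htx⟩
  have hzG : z ∈ Good G l mu a y := Finset.mem_filter.2 ⟨hzmem, ht2⟩
  have hyG : y ∉ Good G l mu a y := by
    intro h
    have := (Finset.mem_filter.1 h).1
    exact G.irrefl ((mem_cn G).1 this).2
  have hsub : ((insert y (Good G l mu a y)).erase x).erase z
      ⊆ (cn G a x).filter (fun p => G.Adj z p) := by
    intro w hw
    obtain ⟨hwz, hw⟩ := Finset.mem_erase.1 hw
    obtain ⟨hwx, hw⟩ := Finset.mem_erase.1 hw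
    have hwA : G.Adj a w ∧ G.Adj x w ∧ G.Adj z w := by
      rcases Finset.mem_insert.1 hw with rfl | hw
      · exact ⟨hay, hxy, G.adj_symm hyz⟩
      · obtain ⟨hwcn, hwt⟩ := Finset.mem_filter.1 hw
        have hwa : G.Adj a w := ((mem_cn G).1 hwcn).1
        have hh1 : G.Adj w x := good_pairwise hlam hmu2 hay hwcn hxmem hwt htx hwx
        have hh2 : G.Adj w z := good_pairwise hlam hmu2 hay hwcn hzmem hwt ht2 hwz
        exact ⟨hwa, G.adj_symm hh1, G.adj_symm hh2⟩
    exact Finset.mem_filter.2 ⟨(mem_cn G).2 ⟨hwA.1, hwA.2.1⟩, hwA.2.2⟩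
  have hcard : (Good G l mu a y).card + 1
      ≤ ((cn G a x).filter (fun p => G.Adj z p)).card + 2 := by
    have hx' : x ∈ insert y (Good G l mu a y) := Finset.mem_insert_of_mem hxG
    have hz' : z ∈ (insert y (Good G l mu a y)).erase x :=
      Finset.mem_erase.2 ⟨fun h => hxz h.symm, Finset.mem_insert_of_mem hzG⟩
    have e0 : (insert y (Good G l mu a y)).card = (Good G l mu a y).card + 1 :=
      Finset.card_insert_of_notMem hyG
    have e1 : ((insert y (Good G l mu a y)).erase x).card + 1
        = (insert y (Good G l mu a y)).card := Finset.card_erase_add_one hx'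
    have e2 : (((insert y (Good G l mu a y)).erase x).erase z).card + 1
        = ((insert y (Good G l mu a y)).erase x).card := Finset.card_erase_add_one hz'
    have := Finset.card_le_card hsub
    omega
  have hzcn : z ∈ cn G a x := (mem_cn G).2 ⟨haz, hadjxz⟩
  have hDx := D_split hlam hax hzcn
  have hGB := Good_Bad_card (mu := mu) hlam hay
  have hBSy := hBS a y hay
  omega

lemma mem_cls_self {a y : V} (hay : G.Adj a y) : y ∈ cls G l mu a y := by
  refine Finset.mem_filter.2 ⟨?_, Or.inl rfl⟩
  simpa [SimpleGraph.mem_neighborFinset] using hay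

lemma cls_subset (a y : V) : cls G l mu a y ⊆ G.neighborFinset a := Finset.filter_subset _ _

lemma mem_cls {a y x : V} : x ∈ cls G l mu a y ↔ G.Adj a x ∧ (x = y ∨ rel G l mu a y x) := by
  simp [cls, SimpleGraph.mem_neighborFinset]

lemma cls_rel' (hlam : HL G l) (hmu2 : HM G mu) (hBS : HB G l mu) {a y x x' : V}
    (hx : x ∈ cls G l mu a y) (hx' : x' ∈ cls G l mu a y) (hne : x ≠ x') :
    rel G l mu a x x' := by
  obtain ⟨hax, hcx⟩ := (mem_cls).1 hx
  obtain ⟨hax', hcx'⟩ := (mem_cls).1 hx'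
  rcases hcx with rfl | r1
  · rcases hcx' with rfl | r2
    · exact absurd rfl hne
    · exact r2
  · rcases hcx' with rfl | r2
    · exact rel_symm hlam r1
    · exact rel_trans hlam hmu2 hBS (rel_symm hlam r1) r2 hne

lemma cls_eq_of_mem (hlam : HL G l) (hmu2 : HM G mu) (hBS : HB G l mu) {a y x : V} (hx : x ∈ cls G l mu a y) :
    cls G l mu a x = cls G l mu a y := by
  obtain ⟨hax, hcx⟩ := (mem_cls).1 hx
  ext w
  rw [mem_cls, mem_cls]
  constructor
  · rintro ⟨haw, hcw⟩
    refine ⟨haw, ?_⟩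
    rcases hcw with rfl | rw1
    · exact hcx
    · rcases hcx with rfl | rx
      · exact Or.inr rw1
      · by_cases hwy : w = y
        · exact Or.inl hwy
        · exact Or.inr (rel_trans hlam hmu2 hBS rx rw1 (fun h => hwy h.symm))
  · rintro ⟨haw, hcw⟩
    refine ⟨haw, ?_⟩
    rcases hcw with rfl | rw1
    · rcases hcx with rfl | rx
      · exact Or.inl rfl
      · exact Or.inr (rel_symm hlam rx)
    · rcases hcx with rfl | rx
      · exact Or.inr rw1
      · by_cases hwx : w = x
        · exact Or.inl hwx
        · exact Or.inr (rel_trans hlam hmu2 hBS (rel_symm hlam rx) rw1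
            (fun h => hwx h.symm))

lemma cls_card_lb (hlam : HL G l) {a y : V} (hay : G.Adj a y) :
    l + 1 ≤ (cls G l mu a y).card + (Bad G l mu a y).card := by
  have hsub : insert y (Good G l mu a y) ⊆ cls G l mu a y := by
    intro g hg
    rcases Finset.mem_insert.1 hg with rfl | hg
    · exact mem_cls_self hay
    · obtain ⟨hgcn, hgt⟩ := Finset.mem_filter.1 hg
      obtain ⟨hag, hyg⟩ := (mem_cn G).1 hgcn
      exact (mem_cls).2 ⟨hag, Or.inr ⟨hay, hag, hyg, hgt⟩⟩
  have hyG : y ∉ Good G l mu a y := by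
    intro h
    exact G.irrefl ((mem_cn G).1 (Finset.mem_filter.1 h).1).2
  have h1 := Finset.card_le_card hsub
  rw [Finset.card_insert_of_notMem hyG] at h1
  have h2 := Good_Bad_card (mu := mu) hlam hay
  omega

lemma sep_count (hlam : HL G l) (hmu2 : HM G mu) (hBS : HB G l mu) {v z y y' : V} (hvz : ¬ G.Adj v z) (hvzne : v ≠ z)
    (hvy : G.Adj v y) (hzy : G.Adj z y)
    (h1 : y' ∈ cls G l mu v y) (h2 : y' ∈ cls G l mu z y) (hne : y ≠ y') :
    (cls G l mu v y).card + (cls G l mu z y).card ≤ l + mu + 4 := by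
  have hyy' : G.Adj y y' :=
    (cls_rel' hlam hmu2 hBS (mem_cls_self hvy) h1 hne).2.2.1
  set A := ((cls G l mu v y).erase y).erase y' with hAdef
  set B := ((cls G l mu z y).erase y).erase y' with hBdef
  have hA2 : A.card + 2 = (cls G l mu v y).card := by
    have e1 : ((cls G l mu v y).erase y).card + 1 = (cls G l mu v y).card :=
      Finset.card_erase_add_one (mem_cls_self hvy)
    have hy' : y' ∈ (cls G l mu v y).erase y :=
      Finset.mem_erase.2 ⟨fun h => hne h.symm, h1⟩
    have e2 : A.card + 1 = ((cls G l mu v y).erase y).card := Finset.card_erase_add_one hy'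
    omega
  have hB2 : B.card + 2 = (cls G l mu z y).card := by
    have e1 : ((cls G l mu z y).erase y).card + 1 = (cls G l mu z y).card :=
      Finset.card_erase_add_one (mem_cls_self hzy)
    have hy' : y' ∈ (cls G l mu z y).erase y :=
      Finset.mem_erase.2 ⟨fun h => hne h.symm, h2⟩
    have e2 : B.card + 1 = ((cls G l mu z y).erase y).card := Finset.card_erase_add_one hy'
    omega
  have hAsub : A ⊆ cn G y y' := by
    intro w hw
    obtain ⟨hwy', hw⟩ := Finset.mem_erase.1 hw
    obtain ⟨hwy, hw⟩ := Finset.mem_erase.1 hw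
    have r1 := cls_rel' hlam hmu2 hBS hw (mem_cls_self hvy) hwy
    have r2 := cls_rel' hlam hmu2 hBS hw h1 hwy'
    exact (mem_cn G).2 ⟨G.adj_symm r1.2.2.1, G.adj_symm r2.2.2.1⟩
  have hBsub : B ⊆ cn G y y' := by
    intro w hw
    obtain ⟨hwy', hw⟩ := Finset.mem_erase.1 hw
    obtain ⟨hwy, hw⟩ := Finset.mem_erase.1 hw
    have r1 := cls_rel' hlam hmu2 hBS hw (mem_cls_self hzy) hwy
    have r2 := cls_rel' hlam hmu2 hBS hw h2 hwy'
    exact (mem_cn G).2 ⟨G.adj_symm r1.2.2.1, G.adj_symm r2.2.2.1⟩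
  have hU : (A ∪ B).card ≤ l := by
    have hs : A ∪ B ⊆ cn G y y' := Finset.union_subset hAsub hBsub
    have hc := Finset.card_le_card hs
    rwa [hlam hyy'] at hc
  have hI : (A ∩ B).card ≤ mu := by
    have hsub : A ∩ B ⊆ cn G v z := by
      intro w hw
      obtain ⟨hwA, hwB⟩ := Finset.mem_inter.1 hw
      have h1' : w ∈ cls G l mu v y := (Finset.mem_erase.1 (Finset.mem_erase.1 hwA).2).2
      have h2' : w ∈ cls G l mu z y := (Finset.mem_erase.1 (Finset.mem_erase.1 hwB).2).2
      have hv : G.Adj v w := by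
        have := cls_subset v y h1'
        simpa [SimpleGraph.mem_neighborFinset] using this
      have hz : G.Adj z w := by
        have := cls_subset z y h2'
        simpa [SimpleGraph.mem_neighborFinset] using this
      exact (mem_cn G).2 ⟨hv, hz⟩
    have hb : (cn G v z).card ≤ mu := hmu2 hvzne hvz hvy (G.adj_symm hzy)
    exact le_trans (Finset.card_le_card hsub) hb
  have := Finset.card_union_add_card_inter A B
  omega

lemma Reps_card (hlam : HL G l) (hdeg : HD G k) (hmu2 : HM G mu) (hBS : HB G l mu) {a : V}
    (ha : ∀ y : V, G.Adj a y → l + 1 + mu ≤ 2 * (cls G l mu a y).card) :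
    (Reps G l mu a).card * (l + 1 + mu) ≤ 2 * k := by
  have hdisj : ∀ C ∈ Reps G l mu a, ∀ C' ∈ Reps G l mu a, C ≠ C' → Disjoint C C' := by
    intro C hC C' hC' hne
    rw [Finset.disjoint_left]
    intro w hwC hwC'
    obtain ⟨y, hy, rfl⟩ := Finset.mem_image.1 hC
    obtain ⟨y', hy', rfl⟩ := Finset.mem_image.1 hC'
    exact hne ((cls_eq_of_mem hlam hmu2 hBS hwC).symm.trans
      (cls_eq_of_mem hlam hmu2 hBS hwC'))
  have hsum : ∑ C ∈ Reps G l mu a, C.card ≤ k := by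
    have hbi := Finset.card_biUnion hdisj
    have hsub : (Reps G l mu a).biUnion (fun x => x) ⊆ G.neighborFinset a := by
      intro w hw
      obtain ⟨C, hC, hwC⟩ := Finset.mem_biUnion.1 hw
      obtain ⟨y, hy, rfl⟩ := Finset.mem_image.1 hC
      exact cls_subset a y hwC
    have hc := Finset.card_le_card hsub
    rw [hbi] at hc
    simpa [hdeg a] using hc
  have hlow : (Reps G l mu a).card * (l + 1 + mu) ≤ ∑ C ∈ Reps G l mu a, 2 * C.card := by
    calc (Reps G l mu a).card * (l + 1 + mu) = ∑ _C ∈ Reps G l mu a, (l + 1 + mu) := by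
          rw [Finset.sum_const, smul_eq_mul]
      _ ≤ _ := by
          apply Finset.sum_le_sum
          intro C hC
          obtain ⟨y, hy, rfl⟩ := Finset.mem_image.1 hC
          exact ha y (by simpa [SimpleGraph.mem_neighborFinset] using hy)
  have h2 : ∑ C ∈ Reps G l mu a, 2 * C.card = 2 * ∑ C ∈ Reps G l mu a, C.card := by
    rw [Finset.mul_sum]
  omega

end Counting

lemma exists_path2 {u v : V} (w : G.Walk u v) :
    u ≠ v → ¬ G.Adj u v → ∃ a b c : V, G.Adj a c ∧ G.Adj c b ∧ a ≠ b ∧ ¬ G.Adj a b := by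
  induction w with
  | nil => intro h _; exact absurd rfl h
  | @cons u w' v h p ih =>
    intro hne hnadj
    by_cases hwv : w' = v
    · subst hwv; exact absurd h hnadj
    · by_cases hadj : G.Adj w' v
      · exact ⟨u, v, w', h, hadj, hne, hnadj⟩
      · exact ih hwv hadj

end BWaux


set_option maxHeartbeats 4000000 in
/-- **Theorem 1** (Babai--Wilmes): bound on `λ` in sub-amply regular graphs. -/
theorem lambda_bound {V : Type*} [Fintype V] [DecidableEq V] (G : SimpleGraph V)
    [DecidableRel G.Adj] (n k lam mu : ℕ)
    (hG : SubAmplyRegular G n k lam mu)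
    (hnc : ¬ IsDisjointUnionOfCliques G) :
    (lam : ℝ) + 1 <
      max (4 * Real.sqrt (2 * n))
        (6 / (Real.sqrt 13 - 1) * Real.sqrt ((k : ℝ) * ((mu : ℝ) - 1))) := by
  classical
  obtain ⟨hn, hreg, hlam0, hmu0⟩ := hG
  by_contra hcon
  push_neg at hcon
  have hA : 4 * Real.sqrt (2 * n) ≤ (lam : ℝ) + 1 := le_trans (le_max_left _ _) hcon
  have hB : 6 / (Real.sqrt 13 - 1) * Real.sqrt ((k : ℝ) * ((mu : ℝ) - 1)) ≤ (lam : ℝ) + 1 :=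
    le_trans (le_max_right _ _) hcon
  have hlam : BWaux.HL G lam := fun x y h => hlam0 x y h
  have hdeg : BWaux.HD G k := fun a => hreg a
  -- extract an induced path of length 2
  rw [IsDisjointUnionOfCliques] at hnc
  push_neg at hnc
  obtain ⟨p0, q0, hreach, hne0, hnadj0⟩ := hnc
  obtain ⟨w0⟩ := hreach
  obtain ⟨u, w, v, huv, hvw, huw_ne, huw⟩ := BWaux.exists_path2 w0 hne0 hnadj0
  -- the mu hypothesis, in convenient form
  have hmu2 : BWaux.HM G mu := by
    intro x y c hne hnadj hxc hcy
    have hr : G.Reachable x y :=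
      ⟨SimpleGraph.Walk.cons hxc (SimpleGraph.Walk.cons hcy SimpleGraph.Walk.nil)⟩
    have hle : G.dist x y ≤ 2 := by
      have h := SimpleGraph.dist_le
        (SimpleGraph.Walk.cons hxc (SimpleGraph.Walk.cons hcy SimpleGraph.Walk.nil))
      simpa using h
    have h0 : G.dist x y ≠ 0 := by
      intro h
      rcases SimpleGraph.dist_eq_zero_iff_eq_or_not_reachable.1 h with h' | h'
      · exact hne h'
      · exact h' hr
    have h1 : G.dist x y ≠ 1 := fun h => hnadj (SimpleGraph.dist_eq_one_iff_adj.mp h)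
    have hd2 : G.dist x y = 2 := by omega
    exact hmu0 x y hd2
  -- basic facts
  have hmu_ge1 : 1 ≤ mu := by
    have hv : v ∈ BWaux.cn G u w := (BWaux.mem_cn G).2 ⟨huv, G.adj_symm hvw⟩
    have hpos : 0 < (BWaux.cn G u w).card := Finset.card_pos.2 ⟨v, hv⟩
    have h2 : (BWaux.cn G u w).card ≤ mu := hmu2 huw_ne huw huv hvw
    omega
  obtain ⟨X, hX⟩ : ∃ X, mu = X + 1 := ⟨mu - 1, by omega⟩
  -- k ≥ lam + 2
  have hk2 : lam + 2 ≤ k := by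
    have hvnb : v ∈ G.neighborFinset u := by
      simpa [SimpleGraph.mem_neighborFinset] using huv
    have hsub1 : BWaux.cn G u v ⊆ (G.neighborFinset u).erase v := by
      intro x hx
      obtain ⟨h1, h2⟩ := (BWaux.mem_cn G).1 hx
      refine Finset.mem_erase.2 ⟨?_, by simpa [SimpleGraph.mem_neighborFinset] using h1⟩
      rintro rfl; exact G.irrefl h2
    have hc1 : ((G.neighborFinset u).erase v).card + 1 = k := by
      rw [Finset.card_erase_add_one hvnb, hdeg u]
    have hle1 : lam ≤ ((G.neighborFinset u).erase v).card := by
      rw [← hlam huv]; exact Finset.card_le_card hsub1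
    rcases Nat.lt_or_ge (lam + 1) k with h | h
    · omega
    · exfalso
      have hunb : u ∈ G.neighborFinset v := by
        simpa [SimpleGraph.mem_neighborFinset] using G.adj_symm huv
      have hsub2 : BWaux.cn G v u ⊆ (G.neighborFinset v).erase u := by
        intro x hx
        obtain ⟨h1, h2⟩ := (BWaux.mem_cn G).1 hx
        refine Finset.mem_erase.2 ⟨?_, by simpa [SimpleGraph.mem_neighborFinset] using h1⟩
        rintro rfl; exact G.irrefl h2
      have hc2 : ((G.neighborFinset v).erase u).card + 1 = k := by
        rw [Finset.card_erase_add_one hunb, hdeg v]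
      have heq : BWaux.cn G v u = (G.neighborFinset v).erase u := by
        apply Finset.eq_of_subset_of_card_le hsub2
        rw [hlam (G.adj_symm huv)]
        omega
      have hw_in : w ∈ (G.neighborFinset v).erase u := by
        refine Finset.mem_erase.2 ⟨fun h => huw_ne h.symm, ?_⟩
        simpa [SimpleGraph.mem_neighborFinset] using hvw
      rw [← heq] at hw_in
      exact huw ((BWaux.mem_cn G).1 hw_in).2
  -- k + mu ≥ 2 lam + 3
  have hD1 : 2 * lam + 3 ≤ k + mu := by
    have hABi : (BWaux.cn G u v ∩ BWaux.cn G w v).card + 1 ≤ mu := by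
      have hsub : insert v (BWaux.cn G u v ∩ BWaux.cn G w v) ⊆ BWaux.cn G u w := by
        intro x hx
        rcases Finset.mem_insert.1 hx with rfl | hx
        · exact (BWaux.mem_cn G).2 ⟨huv, G.adj_symm hvw⟩
        · obtain ⟨h1, h2⟩ := Finset.mem_inter.1 hx
          exact (BWaux.mem_cn G).2 ⟨((BWaux.mem_cn G).1 h1).1, ((BWaux.mem_cn G).1 h2).1⟩
      have hvnot : v ∉ BWaux.cn G u v ∩ BWaux.cn G w v := by
        intro h
        exact G.irrefl ((BWaux.mem_cn G).1 (Finset.mem_inter.1 h).1).2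
      have h1 := Finset.card_le_card hsub
      rw [Finset.card_insert_of_notMem hvnot] at h1
      have h2 : (BWaux.cn G u w).card ≤ mu := hmu2 huw_ne huw huv hvw
      omega
    have hABu : (BWaux.cn G u v ∪ BWaux.cn G w v).card + 2 ≤ k := by
      have hsub : BWaux.cn G u v ∪ BWaux.cn G w v ⊆ ((G.neighborFinset v).erase u).erase w := by
        intro x hx
        have hxv : G.Adj v x := by
          rcases Finset.mem_union.1 hx with hx | hx
          · exact ((BWaux.mem_cn G).1 hx).2
          · exact ((BWaux.mem_cn G).1 hx).2
        have hxu : x ≠ u := by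
          rintro rfl
          rcases Finset.mem_union.1 hx with hx | hx
          · exact G.irrefl ((BWaux.mem_cn G).1 hx).1
          · exact huw (G.adj_symm ((BWaux.mem_cn G).1 hx).1)
        have hxw : x ≠ w := by
          rintro rfl
          rcases Finset.mem_union.1 hx with hx | hx
          · exact huw ((BWaux.mem_cn G).1 hx).1
          · exact G.irrefl ((BWaux.mem_cn G).1 hx).1
        exact Finset.mem_erase.2 ⟨hxw, Finset.mem_erase.2
          ⟨hxu, by simpa [SimpleGraph.mem_neighborFinset] using hxv⟩⟩
      have hunb : u ∈ G.neighborFinset v := by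
        simpa [SimpleGraph.mem_neighborFinset] using G.adj_symm huv
      have hwnb : w ∈ (G.neighborFinset v).erase u := by
        refine Finset.mem_erase.2 ⟨fun h => huw_ne h.symm, ?_⟩
        simpa [SimpleGraph.mem_neighborFinset] using hvw
      have e1 : ((G.neighborFinset v).erase u).card + 1 = k := by
        rw [Finset.card_erase_add_one hunb, hdeg v]
      have e2 : (((G.neighborFinset v).erase u).erase w).card + 1
          = ((G.neighborFinset v).erase u).card := Finset.card_erase_add_one hwnb
      have := Finset.card_le_card hsub
      omega
    have hui := Finset.card_union_add_card_inter (BWaux.cn G u v) (BWaux.cn G w v)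
    rw [hlam huv, hlam (G.adj_symm hvw)] at hui
    omega
  -- n + mu ≥ 2k + 2
  have hn2k : 2 * k + 2 ≤ n + mu := by
    have hunotin : u ∉ G.neighborFinset u := by simp
    have hwnotin : w ∉ G.neighborFinset w := by simp
    have hNu : (insert u (G.neighborFinset u)).card = k + 1 := by
      rw [Finset.card_insert_of_notMem hunotin, hdeg u]
    have hNw : (insert w (G.neighborFinset w)).card = k + 1 := by
      rw [Finset.card_insert_of_notMem hwnotin, hdeg w]
    have hIsub : (insert u (G.neighborFinset u)) ∩ (insert w (G.neighborFinset w))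
        ⊆ BWaux.cn G u w := by
      intro x hx
      obtain ⟨h1, h2⟩ := Finset.mem_inter.1 hx
      have hx1 : x = u ∨ G.Adj u x := by
        rcases Finset.mem_insert.1 h1 with h | h
        · exact Or.inl h
        · exact Or.inr (by simpa [SimpleGraph.mem_neighborFinset] using h)
      have hx2 : x = w ∨ G.Adj w x := by
        rcases Finset.mem_insert.1 h2 with h | h
        · exact Or.inl h
        · exact Or.inr (by simpa [SimpleGraph.mem_neighborFinset] using h)
      rcases hx1 with rfl | hx1
      · rcases hx2 with h | h
        · exact absurd h huw_ne
        · exact absurd (G.adj_symm h) huw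
      · rcases hx2 with rfl | hx2
        · exact absurd hx1 huw
        · exact (BWaux.mem_cn G).2 ⟨hx1, hx2⟩
    have hIle : ((insert u (G.neighborFinset u)) ∩ (insert w (G.neighborFinset w))).card ≤ mu :=
      le_trans (Finset.card_le_card hIsub) (hmu2 huw_ne huw huv hvw)
    have hUle : ((insert u (G.neighborFinset u)) ∪ (insert w (G.neighborFinset w))).card ≤ n := by
      rw [← hn, ← Finset.card_univ]
      exact Finset.card_le_card (Finset.subset_univ _)
    have := Finset.card_union_add_card_inter (insert u (G.neighborFinset u))
      (insert w (G.neighborFinset w))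
    omega
  -- convert the real hypotheses into natural-number inequalities
  have h32 : 32 * n ≤ (lam + 1) * (lam + 1) := by
    have h1 : (0:ℝ) ≤ 2 * (n:ℝ) := by positivity
    have hs : Real.sqrt (2 * (n:ℝ)) * Real.sqrt (2 * (n:ℝ)) = 2 * (n:ℝ) :=
      Real.mul_self_sqrt h1
    have h2 : (0:ℝ) ≤ 4 * Real.sqrt (2 * (n:ℝ)) := by positivity
    have h3 := mul_self_le_mul_self h2 hA
    have h4 : (32:ℝ) * (n:ℝ) ≤ ((lam:ℝ) + 1) * ((lam:ℝ) + 1) := by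
      nlinarith [h3, hs]
    have h5 : ((32 * n : ℕ) : ℝ) ≤ (((lam + 1) * (lam + 1) : ℕ) : ℝ) := by
      push_cast
      linarith
    exact_mod_cast h5
  have h53 : 53 * (k * X) ≤ 10 * ((lam + 1) * (lam + 1)) := by
    have h13 : (191/53 : ℝ) ≤ Real.sqrt 13 := by
      rw [Real.le_sqrt (by norm_num) (by norm_num)]
      norm_num
    have hpos : (0:ℝ) < Real.sqrt 13 - 1 := by
      have : (1:ℝ) < 191/53 := by norm_num
      linarith
    have hmureal : ((mu:ℝ) - 1) = (X:ℝ) := by rw [hX]; push_cast; ring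
    have hkX0 : (0:ℝ) ≤ (k:ℝ) * ((mu:ℝ) - 1) := by rw [hmureal]; positivity
    set r := Real.sqrt ((k:ℝ) * ((mu:ℝ) - 1)) with hrdef
    have hr0 : (0:ℝ) ≤ r := Real.sqrt_nonneg _
    have hrsq : r * r = (k:ℝ) * ((mu:ℝ) - 1) := Real.mul_self_sqrt hkX0
    have h6r : 6 * r ≤ ((lam:ℝ) + 1) * (Real.sqrt 13 - 1) := by
      have hmul := mul_le_mul_of_nonneg_right hB (le_of_lt hpos)
      have hid : 6 / (Real.sqrt 13 - 1) * r * (Real.sqrt 13 - 1) = 6 * r := by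
        field_simp
      rw [hid] at hmul
      linarith [hmul]
    have hq0 : (0:ℝ) ≤ ((lam:ℝ) + 1) := by positivity
    have hsq13 : Real.sqrt 13 * Real.sqrt 13 = 13 := Real.mul_self_sqrt (by norm_num)
    have h6r0 : (0:ℝ) ≤ 6 * r := by positivity
    have hsqr := mul_self_le_mul_self h6r0 h6r
    -- 36 r² ≤ q² (14 - 2 √13) ≤ q² * 360/53
    have h13q : (((lam:ℝ) + 1) * (Real.sqrt 13 - 1)) * (((lam:ℝ) + 1) * (Real.sqrt 13 - 1))
        = (((lam:ℝ) + 1) * ((lam:ℝ) + 1)) * (14 - 2 * Real.sqrt 13) := by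
      have : Real.sqrt 13 * Real.sqrt 13 = 13 := hsq13
      nlinarith [this]
    have h36 : 36 * ((k:ℝ) * ((mu:ℝ) - 1))
        ≤ (((lam:ℝ) + 1) * ((lam:ℝ) + 1)) * (14 - 2 * Real.sqrt 13) := by
      rw [← h13q]
      nlinarith [hsqr, hrsq]
    have h360 : (((lam:ℝ) + 1) * ((lam:ℝ) + 1)) * (14 - 2 * Real.sqrt 13)
        ≤ (((lam:ℝ) + 1) * ((lam:ℝ) + 1)) * (360/53) := by
      apply mul_le_mul_of_nonneg_left _ (by positivity)
      linarith [h13]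
    have hfin : (53:ℝ) * ((k:ℝ) * (X:ℝ)) ≤ 10 * (((lam:ℝ) + 1) * ((lam:ℝ) + 1)) := by
      rw [← hmureal]
      linarith [h36, h360]
    have h5 : ((53 * (k * X) : ℕ) : ℝ) ≤ ((10 * ((lam + 1) * (lam + 1)) : ℕ) : ℝ) := by
      push_cast
      linarith
    exact_mod_cast h5
  -- mu is small: 10 * mu ≤ lam + 10
  have hmuq : 10 * mu ≤ lam + 10 := by
    by_contra hcon2
    push_neg at hcon2
    have hXq : 10 * X ≥ lam + 1 := by omega
    have hz53 : (53:ℤ) * (k * X) ≤ 10 * (((lam:ℤ) + 1) * ((lam:ℤ) + 1)) := by exact_mod_cast h53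
    have hzD1 : (2:ℤ) * lam + 3 ≤ (k:ℤ) + mu := by exact_mod_cast hD1
    have hzk2 : (lam:ℤ) + 2 ≤ k := by exact_mod_cast hk2
    have hzXq : 10 * (X:ℤ) ≥ (lam:ℤ) + 1 := by exact_mod_cast hXq
    have hzX : (mu:ℤ) = X + 1 := by exact_mod_cast hX
    have hX0 : (0:ℤ) ≤ X := by positivity
    have hl0 : (0:ℤ) ≤ (lam:ℤ) := by positivity
    have hkX : (2 * ((lam:ℤ) + 1) - X) * X ≤ (k:ℤ) * X := by
      apply mul_le_mul_of_nonneg_right _ hX0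
      omega
    have hq1 : (1:ℤ) ≤ (lam:ℤ) + 1 := by linarith
    rcases le_or_gt (5 * (X:ℤ)) (9 * ((lam:ℤ) + 1)) with hc | hc
    · have a1 : (0:ℤ) ≤ (10 * X - ((lam:ℤ) + 1)) * (9 * ((lam:ℤ) + 1) - 5 * X) :=
        mul_nonneg (by linarith) (by linarith)
      have a2 : (0:ℤ) ≤ (10 * X - ((lam:ℤ) + 1)) * (((lam:ℤ) + 1)) :=
        mul_nonneg (by linarith) (by linarith)
      have a3 : (0:ℤ) ≤ (((lam:ℤ) + 1)) * (((lam:ℤ) + 1)) := mul_nonneg (by linarith) (by linarith)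
      have a4 : (1:ℤ) * (((lam:ℤ) + 1)) ≤ (((lam:ℤ) + 1)) * (((lam:ℤ) + 1)) :=
        mul_le_mul_of_nonneg_right hq1 (by linarith)
      linarith [a1, a2, a4, hkX, hz53]
    · have hkX2 : (((lam:ℤ) + 2)) * X ≤ (k:ℤ) * X :=
        mul_le_mul_of_nonneg_right hzk2 hX0
      have a1 : (((lam:ℤ) + 2)) * (9 * ((lam:ℤ) + 1) + 1) ≤ (((lam:ℤ) + 2)) * (5 * X) :=
        mul_le_mul_of_nonneg_left (by linarith) (by linarith)
      linarith [a1, hkX2, hz53]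
  -- lam is large
  have hl118 : 118 ≤ lam := by
    by_contra hcon2
    push_neg at hcon2
    have hz : (lam:ℤ) ≤ 117 := by exact_mod_cast Nat.lt_succ_iff.mp hcon2
    have hz32 : (32:ℤ) * n ≤ ((lam:ℤ) + 1) * ((lam:ℤ) + 1) := by exact_mod_cast h32
    have hzn : (2:ℤ) * k + 2 ≤ (n:ℤ) + mu := by exact_mod_cast hn2k
    have hzD1 : (2:ℤ) * lam + 3 ≤ (k:ℤ) + mu := by exact_mod_cast hD1
    have hzmuq : (10:ℤ) * mu ≤ (lam:ℤ) + 10 := by exact_mod_cast hmuq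
    have hzmu1 : (1:ℤ) ≤ mu := by exact_mod_cast hmu_ge1
    have hl0 : (0:ℤ) ≤ (lam:ℤ) := by positivity
    have a1 : (0:ℤ) ≤ (117 - (lam:ℤ)) * (lam:ℤ) := mul_nonneg (by linarith) hl0
    linarith [a1]
  -- every edge has few bad vertices
  have hBS : BWaux.HB G lam mu := by
    intro a b hab
    by_contra hcon2
    push_neg at hcon2
    have hbm := BWaux.Bad_mass hlam hmu2 hab
    have hoc := BWaux.Oset_card hlam hdeg hab
    set B := (BWaux.Bad G lam mu a b).card with hBdef
    set O := (BWaux.Oset G a b).card with hOdef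
    have hzbm : (B:ℤ) * ((lam:ℤ) + 2) + 2 * O ≤ (B:ℤ) * mu + 2 * ((O:ℤ) * mu) := by
      exact_mod_cast hbm
    have hzoc : (O:ℤ) + ((lam:ℤ) + 1) = k := by exact_mod_cast hoc
    have hzcon : (lam:ℤ) + 2 ≤ 2 * B + mu := by exact_mod_cast hcon2
    have hz53 : (53:ℤ) * (k * X) ≤ 10 * (((lam:ℤ) + 1) * ((lam:ℤ) + 1)) := by exact_mod_cast h53
    have hzmuq : (10:ℤ) * mu ≤ (lam:ℤ) + 10 := by exact_mod_cast hmuq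
    have hzmu : (mu:ℤ) = X + 1 := by exact_mod_cast hX
    have hzl : (118:ℤ) ≤ lam := by exact_mod_cast hl118
    have hzk2 : (lam:ℤ) + 2 ≤ k := by exact_mod_cast hk2
    have hX0 : (0:ℤ) ≤ X := by positivity
    have hB0 : (0:ℤ) ≤ B := by positivity
    have hO0 : (0:ℤ) ≤ O := by positivity
    -- P := lam + 2 - mu
    have hP : (10:ℤ) * ((lam:ℤ) + 2 - mu) ≥ 9 * ((lam:ℤ) + 1) + 1 := by linarith
    have hPpos : (0:ℤ) < (lam:ℤ) + 2 - mu := by linarith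
    have hBmu : (B:ℤ) * mu = B * X + B := by rw [hzmu]; ring
    have hOmu : (O:ℤ) * mu = O * X + O := by rw [hzmu]; ring
    have hBP : (B:ℤ) * ((lam:ℤ) + 2 - mu) ≤ 2 * (O * X) := by
      have : (B:ℤ) * ((lam:ℤ) + 2 - mu) = B * ((lam:ℤ) + 2) - B * mu := by ring
      rw [this, hBmu]
      linarith [hzbm, hOmu]
    have hsq : ((lam:ℤ) + 2 - mu) * ((lam:ℤ) + 2 - mu) ≤ 2 * B * ((lam:ℤ) + 2 - mu) := by
      apply mul_le_mul_of_nonneg_right _ (le_of_lt hPpos)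
      linarith
    have hOk : (O:ℤ) * X ≤ (k:ℤ) * X :=
      mul_le_mul_of_nonneg_right (by linarith) hX0
    have hPP : (9 * ((lam:ℤ) + 1) + 1) * (9 * ((lam:ℤ) + 1) + 1)
        ≤ (10 * ((lam:ℤ) + 2 - mu)) * (10 * ((lam:ℤ) + 2 - mu)) :=
      mul_le_mul hP hP (by linarith) (by linarith)
    have hq0 : (0:ℤ) ≤ (lam:ℤ) + 1 := by linarith
    have hqsq : (0:ℤ) ≤ ((lam:ℤ) + 1) * ((lam:ℤ) + 1) := mul_nonneg hq0 hq0
    linarith [hsq, hBP, hOk, hz53, hPP, hq0, hqsq]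
  -- class sizes are large
  have hcls2 : ∀ a y : V, G.Adj a y → lam + 1 + mu ≤ 2 * (BWaux.cls G lam mu a y).card := by
    intro a y hay
    have h1 := BWaux.cls_card_lb (mu := mu) hlam hay
    have h2 := hBS a y hay
    omega
  -- second neighborhood of v
  set F := Finset.univ.filter (fun z => ¬ G.Adj v z ∧ z ≠ v) with hFdef
  set Gam := F.filter (fun z => 0 < (BWaux.cn G v z).card) with hGamdef
  obtain ⟨Dd, hDd⟩ : ∃ Dd, (lam + 1) + Dd = k := ⟨k - (lam + 1), by omega⟩
  have hrow : ∀ y, G.Adj v y →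
      (F.filter (fun z => G.Adj y z)).card + (lam + 1) = k := by
    intro y hvy
    have he : F.filter (fun z => G.Adj y z)
        = (G.neighborFinset y).filter (fun z => ¬ G.Adj v z ∧ z ≠ v) := by
      ext z
      simp only [hFdef, Finset.mem_filter, Finset.mem_univ, true_and,
        SimpleGraph.mem_neighborFinset]
      tauto
    rw [he]
    have hsplit := Finset.card_filter_add_card_filter_not
      (s := G.neighborFinset y) (p := fun z => ¬ G.Adj v z ∧ z ≠ v)
    have hneg : (G.neighborFinset y).filter (fun z => ¬ (¬ G.Adj v z ∧ z ≠ v))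
        = insert v (BWaux.cn G v y) := by
      ext z
      simp only [Finset.mem_filter, SimpleGraph.mem_neighborFinset, Finset.mem_insert,
        BWaux.mem_cn, not_and, not_not, not_ne_iff]
      constructor
      · rintro ⟨hyz, hz⟩
        by_cases hvz : G.Adj v z
        · exact Or.inr ⟨hvz, hyz⟩
        · exact Or.inl (hz (fun h => absurd h hvz))
      · rintro (rfl | ⟨h1, h2⟩)
        · exact ⟨G.adj_symm hvy, fun h => rfl⟩
        · exact ⟨h2, fun _ => absurd h1 (by tauto)⟩
    have hvnotin : v ∉ BWaux.cn G v y := by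
      intro h
      exact G.irrefl ((BWaux.mem_cn G).1 h).1
    rw [hneg, Finset.card_insert_of_notMem hvnotin, hlam hvy] at hsplit
    rw [hdeg y] at hsplit
    omega
  have hswap := BWaux.pair_count (G.neighborFinset v) F (fun y z => G.Adj y z)
  have hterm : ∀ y ∈ G.neighborFinset v, (F.filter (fun z => G.Adj y z)).card = Dd := by
    intro y hy
    have hvy : G.Adj v y := by simpa [SimpleGraph.mem_neighborFinset] using hy
    have := hrow y hvy
    omega
  have hS : ∑ y ∈ G.neighborFinset v, (F.filter (fun z => G.Adj y z)).card = k * Dd := by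
    rw [Finset.sum_congr rfl hterm, Finset.sum_const, smul_eq_mul, hdeg v]
  have hcol : ∀ z ∈ F, ((G.neighborFinset v).filter (fun y => G.Adj y z)).card
      = (BWaux.cn G v z).card := by
    intro z hz
    congr 1
    ext y
    simp only [Finset.mem_filter, SimpleGraph.mem_neighborFinset, BWaux.mem_cn]
    constructor
    · rintro ⟨h1, h2⟩; exact ⟨h1, G.adj_symm h2⟩
    · rintro ⟨h1, h2⟩; exact ⟨h1, G.adj_symm h2⟩
  have hGsum : ∑ z ∈ Gam, (BWaux.cn G v z).card = k * Dd := by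
    rw [← hS, hswap, Finset.sum_congr rfl hcol]
    apply Finset.sum_subset (Finset.filter_subset _ _)
    intro z hz hznot
    by_contra hne
    exact hznot (Finset.mem_filter.2 ⟨hz, Nat.pos_of_ne_zero hne⟩)
  have hGamN : k + 1 + Gam.card ≤ n := by
    have hdisjN : Disjoint (insert v (G.neighborFinset v)) Gam := by
      rw [Finset.disjoint_left]
      intro z hz1 hz2
      have hz2' := Finset.mem_filter.1 (Finset.filter_subset _ _ hz2)
      obtain ⟨-, hnadj, hne⟩ := hz2'
      rcases Finset.mem_insert.1 hz1 with rfl | hz1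
      · exact hne rfl
      · exact hnadj (by simpa [SimpleGraph.mem_neighborFinset] using hz1)
    have hvnotin : v ∉ G.neighborFinset v := by simp
    have hUle : ((insert v (G.neighborFinset v)) ∪ Gam).card ≤ n := by
      rw [← hn, ← Finset.card_univ]
      exact Finset.card_le_card (Finset.subset_univ _)
    rw [Finset.card_union_of_disjoint hdisjN, Finset.card_insert_of_notMem hvnotin,
      hdeg v] at hUle
    omega
  -- per-z bound via the clique partitions
  have hz_bound : ∀ z ∈ Gam, (BWaux.cn G v z).card * ((lam + 1 + mu) * (lam + 1 + mu))
      ≤ (2 * k) * (2 * k) := by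
    intro z hz
    have hzF := Finset.mem_filter.1 (Finset.filter_subset _ _ hz)
    obtain ⟨-, hz1, hz2⟩ := hzF
    have hmap : ∀ y ∈ BWaux.cn G v z,
        (BWaux.cls G lam mu v y, BWaux.cls G lam mu z y)
          ∈ (BWaux.Reps G lam mu v) ×ˢ (BWaux.Reps G lam mu z) := by
      intro y hy
      obtain ⟨h1, h2⟩ := (BWaux.mem_cn G).1 hy
      refine Finset.mem_product.2 ⟨Finset.mem_image_of_mem _ ?_, Finset.mem_image_of_mem _ ?_⟩
      · simpa [SimpleGraph.mem_neighborFinset] using h1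
      · simpa [SimpleGraph.mem_neighborFinset] using h2
    have hinj : Set.InjOn (fun y => (BWaux.cls G lam mu v y, BWaux.cls G lam mu z y))
        (BWaux.cn G v z : Set V) := by
      intro y hy y' hy' heq
      by_contra hne
      obtain ⟨hvy, hzy⟩ := (BWaux.mem_cn G).1 (Finset.mem_coe.1 hy)
      obtain ⟨hvy', hzy'⟩ := (BWaux.mem_cn G).1 (Finset.mem_coe.1 hy')
      have heq1 : BWaux.cls G lam mu v y = BWaux.cls G lam mu v y' := congrArg Prod.fst heq
      have heq2 : BWaux.cls G lam mu z y = BWaux.cls G lam mu z y' := congrArg Prod.snd heq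
      have hm1 : y' ∈ BWaux.cls G lam mu v y := by
        rw [heq1]; exact BWaux.mem_cls_self hvy'
      have hm2 : y' ∈ BWaux.cls G lam mu z y := by
        rw [heq2]; exact BWaux.mem_cls_self hzy'
      have hsc := BWaux.sep_count hlam hmu2 hBS hz1 (Ne.symm hz2) hvy hzy hm1 hm2 hne
      have hc1 := BWaux.cls_card_lb (mu := mu) hlam hvy
      have hc2 := BWaux.cls_card_lb (mu := mu) hlam hzy
      have hbm1 := BWaux.Bad_mass hlam hmu2 hvy
      have hbm2 := BWaux.Bad_mass hlam hmu2 hzy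
      have ho1 := BWaux.Oset_card hlam hdeg hvy
      have ho2 := BWaux.Oset_card hlam hdeg hzy
      set B1 := (BWaux.Bad G lam mu v y).card with hB1def
      set B2 := (BWaux.Bad G lam mu z y).card with hB2def
      set O1 := (BWaux.Oset G v y).card with hO1def
      set O2 := (BWaux.Oset G z y).card with hO2def
      have zc1 : (lam:ℤ) + 1 ≤ (BWaux.cls G lam mu v y).card + (B1:ℤ) := by exact_mod_cast hc1
      have zc2 : (lam:ℤ) + 1 ≤ (BWaux.cls G lam mu z y).card + (B2:ℤ) := by exact_mod_cast hc2
      have zsc : ((BWaux.cls G lam mu v y).card : ℤ) + (BWaux.cls G lam mu z y).card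
          ≤ (lam:ℤ) + mu + 4 := by exact_mod_cast hsc
      have zbm1 : (B1:ℤ) * ((lam:ℤ) + 2) + 2 * O1 ≤ (B1:ℤ) * mu + 2 * ((O1:ℤ) * mu) := by
        exact_mod_cast hbm1
      have zbm2 : (B2:ℤ) * ((lam:ℤ) + 2) + 2 * O2 ≤ (B2:ℤ) * mu + 2 * ((O2:ℤ) * mu) := by
        exact_mod_cast hbm2
      have zo1 : (O1:ℤ) + ((lam:ℤ) + 1) = k := by exact_mod_cast ho1
      have zo2 : (O2:ℤ) + ((lam:ℤ) + 1) = k := by exact_mod_cast ho2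
      have z53 : (53:ℤ) * ((k:ℤ) * X) ≤ 10 * (((lam:ℤ) + 1) * ((lam:ℤ) + 1)) := by
        exact_mod_cast h53
      have zmuq : (10:ℤ) * mu ≤ (lam:ℤ) + 10 := by exact_mod_cast hmuq
      have zmu : (mu:ℤ) = (X:ℤ) + 1 := by exact_mod_cast hX
      have zl : (118:ℤ) ≤ (lam:ℤ) := by exact_mod_cast hl118
      have hX0 : (0:ℤ) ≤ (X:ℤ) := by positivity
      have hP : (10:ℤ) * ((lam:ℤ) + 2 - mu) ≥ 9 * ((lam:ℤ) + 1) + 1 := by linarith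
      have hPpos : (0:ℤ) < (lam:ℤ) + 2 - mu := by linarith
      have hBmu1 : (B1:ℤ) * mu = B1 * X + B1 := by rw [zmu]; ring
      have hOmu1 : (O1:ℤ) * mu = O1 * X + O1 := by rw [zmu]; ring
      have hBmu2 : (B2:ℤ) * mu = B2 * X + B2 := by rw [zmu]; ring
      have hOmu2 : (O2:ℤ) * mu = O2 * X + O2 := by rw [zmu]; ring
      have hB1P : (B1:ℤ) * ((lam:ℤ) + 2 - mu) ≤ 2 * (O1 * X) := by
        have : (B1:ℤ) * ((lam:ℤ) + 2 - mu) = B1 * ((lam:ℤ) + 2) - B1 * mu := by ring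
        rw [this, hBmu1]
        linarith [zbm1, hOmu1]
      have hB2P : (B2:ℤ) * ((lam:ℤ) + 2 - mu) ≤ 2 * (O2 * X) := by
        have : (B2:ℤ) * ((lam:ℤ) + 2 - mu) = B2 * ((lam:ℤ) + 2) - B2 * mu := by ring
        rw [this, hBmu2]
        linarith [zbm2, hOmu2]
      have hBsum : (lam:ℤ) - 2 - mu ≤ (B1:ℤ) + B2 := by linarith
      have hstep : ((lam:ℤ) - 2 - mu) * ((lam:ℤ) + 2 - mu)
          ≤ ((B1:ℤ) + B2) * ((lam:ℤ) + 2 - mu) :=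
        mul_le_mul_of_nonneg_right hBsum (le_of_lt hPpos)
      have hO1k : (O1:ℤ) * X ≤ (k:ℤ) * X := mul_le_mul_of_nonneg_right (by linarith) hX0
      have hO2k : (O2:ℤ) * X ≤ (k:ℤ) * X := mul_le_mul_of_nonneg_right (by linarith) hX0
      have hBlow : (10:ℤ) * ((lam:ℤ) - 2 - mu) ≥ 9 * ((lam:ℤ) + 1) - 39 := by linarith
      have hprod : (9 * ((lam:ℤ) + 1) - 39) * (9 * ((lam:ℤ) + 1) + 1)
          ≤ (10 * ((lam:ℤ) - 2 - mu)) * (10 * ((lam:ℤ) + 2 - mu)) :=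
        mul_le_mul hBlow hP (by linarith) (by linarith)
      have hqq : (119:ℤ) * ((lam:ℤ) + 1) ≤ ((lam:ℤ) + 1) * ((lam:ℤ) + 1) :=
        mul_le_mul_of_nonneg_right (by linarith) (by linarith)
      linarith [hprod, hstep, hB1P, hB2P, hO1k, hO2k, z53, hqq, zl]
    have hcard1 : (BWaux.cn G v z).card
        ≤ (BWaux.Reps G lam mu v).card * (BWaux.Reps G lam mu z).card := by
      have := Finset.card_le_card_of_injOn _ hmap hinj
      rwa [Finset.card_product] at this
    have hR1 := BWaux.Reps_card hlam hdeg hmu2 hBS (fun y hy => hcls2 v y hy)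
    have hR2 := BWaux.Reps_card hlam hdeg hmu2 hBS (fun y hy => hcls2 z y hy)
    calc (BWaux.cn G v z).card * ((lam + 1 + mu) * (lam + 1 + mu))
        ≤ ((BWaux.Reps G lam mu v).card * (BWaux.Reps G lam mu z).card)
            * ((lam + 1 + mu) * (lam + 1 + mu)) := mul_le_mul_left hcard1 _
      _ = ((BWaux.Reps G lam mu v).card * (lam + 1 + mu))
            * ((BWaux.Reps G lam mu z).card * (lam + 1 + mu)) := by ring
      _ ≤ (2 * k) * (2 * k) := Nat.mul_le_mul hR1 hR2
  -- final contradiction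
  have hfinal : (k * Dd) * ((lam + 1 + mu) * (lam + 1 + mu))
      ≤ Gam.card * ((2 * k) * (2 * k)) := by
    calc (k * Dd) * ((lam + 1 + mu) * (lam + 1 + mu))
        = (∑ z ∈ Gam, (BWaux.cn G v z).card) * ((lam + 1 + mu) * (lam + 1 + mu)) := by
          rw [hGsum]
      _ = ∑ z ∈ Gam, (BWaux.cn G v z).card * ((lam + 1 + mu) * (lam + 1 + mu)) :=
          Finset.sum_mul _ _ _
      _ ≤ ∑ _z ∈ Gam, (2 * k) * (2 * k) := Finset.sum_le_sum hz_bound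
      _ = Gam.card * ((2 * k) * (2 * k)) := by rw [Finset.sum_const, smul_eq_mul]
  have h20d : 9 * k + 2 ≤ 20 * Dd := by omega
  have hstep1 : (32 * (k * Dd)) * ((lam + 1 + mu) * (lam + 1 + mu))
      ≤ (((lam + 1) * (lam + 1))) * ((2 * k) * (2 * k)) := by
    calc (32 * (k * Dd)) * ((lam + 1 + mu) * (lam + 1 + mu))
        = 32 * ((k * Dd) * ((lam + 1 + mu) * (lam + 1 + mu))) := by ring
      _ ≤ 32 * (Gam.card * ((2 * k) * (2 * k))) := Nat.mul_le_mul_left _ hfinal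
      _ = (32 * Gam.card) * ((2 * k) * (2 * k)) := by ring
      _ ≤ ((lam + 1) * (lam + 1)) * ((2 * k) * (2 * k)) := by
          apply mul_le_mul_left
          omega
  have hMq : (lam + 1) * (lam + 1) ≤ (lam + 1 + mu) * (lam + 1 + mu) :=
    Nat.mul_le_mul (by omega) (by omega)
  have hstep2 : (32 * (k * Dd)) * ((lam + 1) * (lam + 1))
      ≤ ((2 * k) * (2 * k)) * ((lam + 1) * (lam + 1)) := by
    calc (32 * (k * Dd)) * ((lam + 1) * (lam + 1))
        ≤ (32 * (k * Dd)) * ((lam + 1 + mu) * (lam + 1 + mu)) := Nat.mul_le_mul_left _ hMq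
      _ ≤ ((lam + 1) * (lam + 1)) * ((2 * k) * (2 * k)) := hstep1
      _ = ((2 * k) * (2 * k)) * ((lam + 1) * (lam + 1)) := by ring
  have hqqpos : 0 < (lam + 1) * (lam + 1) := by positivity
  have hcancel : 32 * (k * Dd) ≤ (2 * k) * (2 * k) :=
    Nat.le_of_mul_le_mul_right hstep2 hqqpos
  have hm : (9 * k + 2) * k ≤ (20 * Dd) * k := Nat.mul_le_mul_right _ h20d
  have hk1 : 2 ≤ k := by omega
  have hmm : (9 * k + 2) * k ≤ 20 * (k * Dd) := by
    calc (9 * k + 2) * k ≤ (20 * Dd) * k := hm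
      _ = 20 * (k * Dd) := by ring
  nlinarith [hcancel, hmm, hk1]
end

section
/- Let G be a distance-regular graph with degree k, and let s denote the least eigenvalue of the real adjacency matrix of G. Then no clique in G has order greater than 1 + k/|s|. -/
open Finset

/-- A connected graph is *distance-regular* with intersection arrays `b`, `c` if, whenever
`u, v` are vertices at distance `i`, the vertex `v` has exactly `b i` neighbors at distance
`i + 1` from `u` and exactly `c i` neighbors at distance `i - 1` from `u`. -/
def IsDistanceRegular {V : Type*} [Fintype V] [DecidableEq V] (G : SimpleGraph V)
    [DecidableRel G.Adj] (b c : ℕ → ℕ) : Prop :=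
  G.Connected ∧
    ∀ u v : V, ∀ i : ℕ, G.dist u v = i →
      ((G.neighborFinset v).filter fun w => G.dist u w = i + 1).card = b i ∧
      ((G.neighborFinset v).filter fun w => G.dist u w = i - 1).card = c i

open Matrix Polynomial

open SimpleGraph Matrix in
lemma pow_apply_dist_eq {V : Type*} [Fintype V] [DecidableEq V] (G : SimpleGraph V)
    [DecidableRel G.Adj] (b c : ℕ → ℕ) (k : ℕ)
    (hdrg : IsDistanceRegular G b c) (hreg : G.IsRegularOfDegree k) :
    ∀ j : ℕ, ∀ u v u' v' : V, G.dist u v = G.dist u' v' →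
      ((G.adjMatrix ℝ) ^ j) u v = ((G.adjMatrix ℝ) ^ j) u' v' := by
  obtain ⟨hconn, hint⟩ := hdrg
  intro j
  induction j with
  | zero =>
    intro u v u' v' h
    have h1 : (u = v) ↔ (u' = v') := by
      rw [← hconn.dist_eq_zero_iff, ← hconn.dist_eq_zero_iff, h]
    simp only [pow_zero, Matrix.one_apply]
    by_cases huv : u = v
    · rw [if_pos huv, if_pos (h1.mp huv)]
    · rw [if_neg huv, if_neg (fun hc => huv (h1.mpr hc))]
  | succ j ih =>
    -- canonical value of (A^j) at each distance
    set A := G.adjMatrix ℝ with hA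
    have key : ∀ x y : V, (A ^ (j+1)) x y = ∑ w ∈ G.neighborFinset y, (A ^ j) x w := by
      intro x y
      rw [pow_succ, Matrix.mul_apply]
      rw [show (Finset.univ : Finset V) = Finset.univ from rfl]
      rw [← Finset.sum_filter_add_sum_filter_not Finset.univ (fun w => G.Adj w y)]
      have h2 : ∑ w ∈ Finset.univ.filter (fun w => ¬ G.Adj w y), (A^j) x w * A w y = 0 := by
        apply Finset.sum_eq_zero
        intro w hw
        rw [Finset.mem_filter] at hw
        simp [hA, hw.2]
      rw [h2, add_zero]
      have h3 : Finset.univ.filter (fun w => G.Adj w y) = G.neighborFinset y := by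
        ext w
        simp [adj_comm]
      rw [h3]
      apply Finset.sum_congr rfl
      intro w hw
      rw [mem_neighborFinset] at hw
      simp [hA, hw.symm]
    intro u v u' v' h
    rw [key, key]
    -- value function
    have gex : ∀ p q : V, ∃ pq : V × V, G.dist pq.1 pq.2 = G.dist p q := fun p q => ⟨(p, q), rfl⟩
    set g : ℕ → ℝ := fun m => if h : ∃ pq : V × V, G.dist pq.1 pq.2 = m then
        (A ^ j) h.choose.1 h.choose.2 else 0 with hg
    have hgval : ∀ p q : V, (A ^ j) p q = g (G.dist p q) := by
      intro p q
      rw [hg]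
      simp only [dif_pos (gex p q)]
      exact ih p q _ _ ((gex p q).choose_spec.symm)
    have split : ∀ (x y : V), G.dist x y = G.dist u v →
        ∑ w ∈ G.neighborFinset y, (A ^ j) x w =
          if G.dist u v = 0 then (k : ℝ) * g 1
          else (c (G.dist u v) : ℝ) * g (G.dist u v - 1)
            + ((k - (c (G.dist u v) + b (G.dist u v)) : ℕ) : ℝ) * g (G.dist u v)
            + (b (G.dist u v) : ℝ) * g (G.dist u v + 1) := by
      intro x y hxy
      set i := G.dist u v with hi
      by_cases hi0 : i = 0
      · rw [if_pos hi0]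
        have hxeqy : x = y := hconn.dist_eq_zero_iff.mp (hxy.trans hi0)
        have : ∀ w ∈ G.neighborFinset y, (A ^ j) x w = g 1 := by
          intro w hw
          rw [mem_neighborFinset] at hw
          rw [hgval]
          subst hxeqy
          rw [(dist_eq_one_iff_adj).mpr hw]
        rw [Finset.sum_congr rfl this, Finset.sum_const, show #(G.neighborFinset y) = k from hreg y, nsmul_eq_mul]
      · rw [if_neg hi0]
        have hmem : ∀ w ∈ G.neighborFinset y, G.dist x w = i - 1 ∨ G.dist x w = i ∨ G.dist x w = i + 1 := by
          intro w hw
          rw [mem_neighborFinset] at hw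
          have h1 : G.dist x w ≤ G.dist x y + G.dist y w := hconn.dist_triangle
          have h2 : G.dist x y ≤ G.dist x w + G.dist w y := hconn.dist_triangle
          have hd1 : G.dist y w = 1 := (dist_eq_one_iff_adj).mpr hw
          have hd2 : G.dist w y = 1 := (dist_eq_one_iff_adj).mpr hw.symm
          omega
        set S := G.neighborFinset y with hS
        have hcards := hint x y i hxy
        rw [← Finset.sum_filter_add_sum_filter_not S (fun w => G.dist x w = i - 1)]
        rw [← Finset.sum_filter_add_sum_filter_not (S.filter (fun w => ¬ G.dist x w = i - 1))
          (fun w => G.dist x w = i + 1)]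
        have e1 : ∑ w ∈ S.filter (fun w => G.dist x w = i - 1), (A ^ j) x w = (c i : ℝ) * g (i - 1) := by
          have hv : ∀ w ∈ S.filter (fun w => G.dist x w = i - 1), (A ^ j) x w = g (i - 1) := by
            intro w hw
            rw [Finset.mem_filter] at hw
            rw [hgval, hw.2]
          rw [Finset.sum_congr rfl hv, Finset.sum_const, hcards.2, nsmul_eq_mul]
        have e2 : ∑ w ∈ (S.filter (fun w => ¬ G.dist x w = i - 1)).filter (fun w => G.dist x w = i + 1),
            (A ^ j) x w = (b i : ℝ) * g (i + 1) := by
          rw [Finset.filter_filter]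
          have : S.filter (fun w => ¬ G.dist x w = i - 1 ∧ G.dist x w = i + 1)
              = S.filter (fun w => G.dist x w = i + 1) := by
            apply Finset.filter_congr
            intro w _
            constructor
            · exact fun hw => hw.2
            · exact fun hw => ⟨by omega, hw⟩
          rw [this]
          have hv : ∀ w ∈ S.filter (fun w => G.dist x w = i + 1), (A ^ j) x w = g (i + 1) := by
            intro w hw
            rw [Finset.mem_filter] at hw
            rw [hgval, hw.2]
          rw [Finset.sum_congr rfl hv, Finset.sum_const, hcards.1, nsmul_eq_mul]
        have e3 : ∑ w ∈ (S.filter (fun w => ¬ G.dist x w = i - 1)).filter (fun w => ¬ G.dist x w = i + 1),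
            (A ^ j) x w = ((k - (c i + b i) : ℕ) : ℝ) * g i := by
          rw [Finset.filter_filter]
          have hval : ∀ w ∈ S.filter (fun w => ¬ G.dist x w = i - 1 ∧ ¬ G.dist x w = i + 1),
              (A ^ j) x w = g i := by
            intro w hw
            rw [Finset.mem_filter] at hw
            have := hmem w hw.1
            have : G.dist x w = i := by omega
            rw [hgval, this]
          rw [Finset.sum_congr rfl hval, Finset.sum_const, nsmul_eq_mul]
          congr 1
          norm_cast
          -- card equality
          have hcard1 : (S.filter (fun w => ¬ G.dist x w = i - 1 ∧ ¬ G.dist x w = i + 1)).card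
              + (S.filter (fun w => G.dist x w = i - 1)).card
              + (S.filter (fun w => G.dist x w = i + 1)).card = S.card := by
            rw [← Finset.filter_filter]
            have hpart := Finset.card_filter_add_card_filter_not
              (s := S) (p := fun w => G.dist x w = i - 1)
            have hpart2 := Finset.card_filter_add_card_filter_not
              (s := S.filter (fun w => ¬ G.dist x w = i - 1)) (p := fun w => G.dist x w = i + 1)
            have hQ : (S.filter (fun w => ¬ G.dist x w = i - 1)).filter (fun w => G.dist x w = i + 1)
                = S.filter (fun w => G.dist x w = i + 1) := by
              rw [Finset.filter_filter]
              apply Finset.filter_congr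
              intro w _
              constructor
              · exact fun hw => hw.2
              · exact fun hw => ⟨by omega, hw⟩
            rw [hQ] at hpart2
            omega
          have hScard : S.card = k := hreg y
          have hb := hcards.1
          have hc := hcards.2
          rw [← hScard, ← hb, ← hc]
          simp only [← hS]
          omega
        rw [e1, e2, e3]
        ring
    rw [split u v rfl, split u' v' h.symm]

section Spec
variable {n : Type*} [Fintype n] [DecidableEq n] {A : Matrix n n ℝ}

lemma ofReal_comp_eq (hA : A.IsHermitian) :
    (RCLike.ofReal : ℝ → ℝ) ∘ hA.eigenvalues = hA.eigenvalues := by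
  funext i
  simp [RCLike.ofReal]

lemma conj_mul_conj {U D1 D2 : Matrix n n ℝ} (hUU : star U * U = 1) :
    (U * D1 * star U) * (U * D2 * star U) = U * (D1 * D2) * star U := by
  have : (U * D1 * star U) * (U * D2 * star U) = U * (D1 * (star U * U) * D2) * star U := by
    noncomm_ring
  rw [this, hUU, mul_one]

lemma herm_pow (hA : A.IsHermitian) (m : ℕ) :
    A ^ m = (hA.eigenvectorUnitary : Matrix n n ℝ) *
      diagonal (fun i => hA.eigenvalues i ^ m) *
      star (hA.eigenvectorUnitary : Matrix n n ℝ) := by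
  have hUU : (star (hA.eigenvectorUnitary : Matrix n n ℝ)) * hA.eigenvectorUnitary = 1 :=
    Unitary.coe_star_mul_self hA.eigenvectorUnitary
  have hAspec := hA.spectral_theorem
  rw [ofReal_comp_eq hA, Unitary.conjStarAlgAut_apply] at hAspec
  induction m with
  | zero =>
    have h1 : (diagonal fun i : n => hA.eigenvalues i ^ 0) = (1 : Matrix n n ℝ) := by
      simp [diagonal_one]
    rw [pow_zero, h1, mul_one, Matrix.mem_unitaryGroup_iff.mp hA.eigenvectorUnitary.2]
  | succ m ih =>
    calc A ^ (m + 1) = ((hA.eigenvectorUnitary : Matrix n n ℝ) *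
          diagonal (fun i => hA.eigenvalues i ^ m) *
          star (hA.eigenvectorUnitary : Matrix n n ℝ)) * A := by rw [pow_succ, ih]
      _ = ((hA.eigenvectorUnitary : Matrix n n ℝ) *
          diagonal (fun i => hA.eigenvalues i ^ m) *
          star (hA.eigenvectorUnitary : Matrix n n ℝ)) *
          ((hA.eigenvectorUnitary : Matrix n n ℝ) * diagonal hA.eigenvalues *
          star (hA.eigenvectorUnitary : Matrix n n ℝ)) := by rw [← hAspec]
      _ = (hA.eigenvectorUnitary : Matrix n n ℝ) *
          ((diagonal fun i => hA.eigenvalues i ^ m) * diagonal hA.eigenvalues) *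
          star (hA.eigenvectorUnitary : Matrix n n ℝ) := conj_mul_conj hUU
      _ = _ := by
          rw [diagonal_mul_diagonal]
          simp [pow_succ]

lemma herm_aeval (hA : A.IsHermitian) (p : ℝ[X]) :
    (aeval A) p = (hA.eigenvectorUnitary : Matrix n n ℝ) *
      diagonal (fun i => p.eval (hA.eigenvalues i)) *
      star (hA.eigenvectorUnitary : Matrix n n ℝ) := by
  induction p using Polynomial.induction_on' with
  | add p q hp hq =>
    rw [map_add, hp, hq]
    simp only [eval_add]
    rw [← diagonal_add]
    noncomm_ring
  | monomial m a =>
    rw [aeval_monomial]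
    simp only [eval_monomial]
    have h1 : (algebraMap ℝ (Matrix n n ℝ)) a = a • (1 : Matrix n n ℝ) := by
      rw [Algebra.algebraMap_eq_smul_one]
    have h2 : (fun i => a * hA.eigenvalues i ^ m) = a • (fun i => hA.eigenvalues i ^ m) := rfl
    rw [h1, smul_one_mul, herm_pow hA m, h2, diagonal_smul, Matrix.mul_smul, Matrix.smul_mul]

end Spec

section Main
variable {V : Type*} [Fintype V] [DecidableEq V] (G : SimpleGraph V) [DecidableRel G.Adj]

lemma adj_isHermitian : (G.adjMatrix ℝ).IsHermitian := by
  rw [Matrix.IsHermitian, Matrix.conjTranspose_eq_transpose_of_trivial]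
  exact G.isSymm_adjMatrix

lemma eigen_is_eigen (hA : (G.adjMatrix ℝ).IsHermitian) (i : V) :
    ∃ x : V → ℝ, x ≠ 0 ∧ (G.adjMatrix ℝ).mulVec x = hA.eigenvalues i • x := by
  refine ⟨⇑(hA.eigenvectorBasis i), ?_, hA.mulVec_eigenvectorBasis i⟩
  intro h0
  apply hA.eigenvectorBasis.toBasis.ne_zero i
  rw [OrthonormalBasis.coe_toBasis]
  ext v
  exact congrFun h0 v

lemma exists_eigen_eq (hA : (G.adjMatrix ℝ).IsHermitian) (s : ℝ)
    (hs : ∃ x : V → ℝ, x ≠ 0 ∧ (G.adjMatrix ℝ).mulVec x = s • x) :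
    ∃ i : V, hA.eigenvalues i = s := by
  set A := G.adjMatrix ℝ
  obtain ⟨x, hx0, hx⟩ := hs
  have hdet : (A - s • 1).det = 0 := by
    rw [← Matrix.exists_mulVec_eq_zero_iff]
    refine ⟨x, hx0, ?_⟩
    rw [Matrix.sub_mulVec, hx, Matrix.smul_mulVec, Matrix.one_mulVec, sub_self]
  have h1 : A - s • 1 = (aeval A) (X - C s) := by
    rw [map_sub, aeval_X, aeval_C, Algebra.algebraMap_eq_smul_one]
  rw [h1, herm_aeval hA] at hdet
  rw [Matrix.det_mul, Matrix.det_mul] at hdet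
  have h2 : (hA.eigenvectorUnitary : Matrix V V ℝ).det *
      (star (hA.eigenvectorUnitary : Matrix V V ℝ)).det = 1 := by
    rw [← Matrix.det_mul, Matrix.mem_unitaryGroup_iff.mp hA.eigenvectorUnitary.2,
      Matrix.det_one]
  have h3 : (diagonal fun i => eval (hA.eigenvalues i) (X - C s)).det = 0 := by
    rcases mul_eq_zero.mp hdet with h | h
    · rcases mul_eq_zero.mp h with h' | h'
      · exfalso; rw [h', zero_mul] at h2; norm_num at h2
      · exact h'
    · exfalso; rw [h, mul_zero] at h2; norm_num at h2
  rw [Matrix.det_diagonal] at h3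
  obtain ⟨i, _, hi⟩ := Finset.prod_eq_zero_iff.mp h3
  refine ⟨i, ?_⟩
  simp only [eval_sub, eval_X, eval_C] at hi
  linarith [sub_eq_zero.mp hi]

end Main

/-- `θ` is an eigenvalue of the real adjacency matrix of `G`. -/
def IsAdjEigenvalue {V : Type*} [Fintype V] [DecidableEq V] (G : SimpleGraph V)
    [DecidableRel G.Adj] (θ : ℝ) : Prop :=
  ∃ x : V → ℝ, x ≠ 0 ∧ (G.adjMatrix ℝ).mulVec x = θ • x

/-- **Delsarte's bound**: in a distance-regular graph with degree `k` and least adjacency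
eigenvalue `s`, no clique has order greater than `1 + k/|s|`. -/
theorem delsarte_clique_bound {V : Type*} [Fintype V] [DecidableEq V] (G : SimpleGraph V)
    [DecidableRel G.Adj] (b c : ℕ → ℕ) (k : ℕ) (s : ℝ)
    (hdrg : IsDistanceRegular G b c) (hreg : G.IsRegularOfDegree k)
    (hs : IsAdjEigenvalue G s) (hmin : ∀ θ : ℝ, IsAdjEigenvalue G θ → s ≤ θ) :
    ∀ cl : Finset V, G.IsClique (cl : Set V) → (cl.card : ℝ) ≤ 1 + (k : ℝ) / |s| := by
  intro cl hcl
  by_cases hn1 : cl.card ≤ 1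
  · have h1 : (cl.card : ℝ) ≤ 1 := by exact_mod_cast hn1
    have h2 : 0 ≤ (k : ℝ) / |s| := div_nonneg (Nat.cast_nonneg k) (abs_nonneg s)
    linarith
  push_neg at hn1
  obtain ⟨u₀, hu₀, v₀, hv₀, huv⟩ := Finset.one_lt_card.mp hn1
  have hadj : G.Adj u₀ v₀ := hcl hu₀ hv₀ huv
  have hA : (G.adjMatrix ℝ).IsHermitian := adj_isHermitian G
  set A := G.adjMatrix ℝ with hAdef
  set U : Matrix V V ℝ := (hA.eigenvectorUnitary : Matrix V V ℝ) with hUdef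
  have hUU : star U * U = 1 := Unitary.coe_star_mul_self hA.eigenvectorUnitary
  have hUU' : U * star U = 1 := Matrix.mem_unitaryGroup_iff.mp hA.eigenvectorUnitary.2
  set lam : V → ℝ := hA.eigenvalues with hlamdef
  -- all eigenvalues are at least s
  have hge : ∀ i, s ≤ lam i := fun i => hmin _ (eigen_is_eigen G hA i)
  -- some eigenvalue equals s
  obtain ⟨i₀, hi₀⟩ := exists_eigen_eq G hA s hs
  -- the Delsarte polynomial
  set T : Finset ℝ := Finset.image lam Finset.univ with hTdef
  set p : Polynomial ℝ := ∏ t ∈ T.erase s, (C t - X) with hpdef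
  have hpeval : ∀ x : ℝ, p.eval x = ∏ t ∈ T.erase s, (t - x) := by
    intro x
    rw [hpdef, eval_prod]
    exact Finset.prod_congr rfl fun t _ => by simp
  have hp0 : ∀ i, lam i ≠ s → p.eval (lam i) = 0 := by
    intro i hi
    rw [hpeval]
    apply Finset.prod_eq_zero (i := lam i)
    · exact Finset.mem_erase.mpr ⟨hi, Finset.mem_image_of_mem lam (Finset.mem_univ i)⟩
    · ring
  have hps : 0 < p.eval s := by
    rw [hpeval]
    apply Finset.prod_pos
    intro t ht
    rw [Finset.mem_erase] at ht
    obtain ⟨i, _, rfl⟩ := Finset.mem_image.mp ht.2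
    have := hge i
    have := ht.1
    rcases lt_or_eq_of_le (hge i) with h | h
    · linarith
    · exact absurd h.symm ht.1
  have hpnn : ∀ i, 0 ≤ p.eval (lam i) := by
    intro i
    by_cases h : lam i = s
    · rw [h]; exact le_of_lt hps
    · rw [hp0 i h]
  -- the matrix M
  set M : Matrix V V ℝ := (aeval A) p with hMdef
  have hMspec : M = U * diagonal (fun i => p.eval (lam i)) * star U := herm_aeval hA p
  have hMps : M.PosSemidef := by
    rw [hMspec, Matrix.star_eq_conjTranspose]
    exact (Matrix.PosSemidef.diagonal hpnn).mul_mul_conjTranspose_same U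
  -- M * A = s • M
  have hspec : A = U * diagonal lam * star U := by
    have := hA.spectral_theorem
    rwa [ofReal_comp_eq hA, Unitary.conjStarAlgAut_apply] at this
  have hMA : M * A = s • M := by
    calc M * A = (U * diagonal (fun i => p.eval (lam i)) * star U) *
        (U * diagonal lam * star U) := by rw [← hMspec, ← hspec]
      _ = U * ((diagonal fun i => p.eval (lam i)) * diagonal lam) * star U :=
        conj_mul_conj hUU
      _ = U * (s • diagonal fun i => p.eval (lam i)) * star U := by
        rw [diagonal_mul_diagonal]
        have hdd : (fun i => eval (lam i) p * lam i) = s • fun i => eval (lam i) p := by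
          funext i
          simp only [Pi.smul_apply, smul_eq_mul]
          by_cases h : lam i = s
          · rw [h]; ring
          · rw [hp0 i h]; ring
        rw [hdd, diagonal_smul]
      _ = s • M := by
        rw [hMspec, Matrix.mul_smul, Matrix.smul_mul]
  -- entries of M depend only on distance
  have hMdist : ∀ u v u' v' : V, G.dist u v = G.dist u' v' → M u v = M u' v' := by
    intro u v u' v' h
    rw [hMdef, aeval_eq_sum_range]
    simp only [Matrix.sum_apply, Matrix.smul_apply, smul_eq_mul]
    exact Finset.sum_congr rfl fun j _ => by
      rw [pow_apply_dist_eq G b c k hdrg hreg j u v u' v' h]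
  -- trace of M
  have htr : M.trace = ∑ i, p.eval (lam i) := by
    rw [hMspec, Matrix.trace_mul_cycle, hUU, Matrix.one_mul, Matrix.trace_diagonal]
  have htrpos : 0 < M.trace := by
    rw [htr]
    apply Finset.sum_pos' (fun i _ => hpnn i)
    exact ⟨i₀, Finset.mem_univ i₀, by rw [show lam i₀ = s from hi₀]; exact hps⟩
  -- diagonal and adjacent entries
  set α : ℝ := M u₀ u₀ with hαdef
  have hdiag : ∀ u : V, M u u = α :=
    fun u => hMdist u u u₀ u₀ (by rw [SimpleGraph.dist_self, SimpleGraph.dist_self])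
  have hαpos : 0 < α := by
    have h1 : M.trace = (Fintype.card V : ℝ) * α := by
      rw [Matrix.trace]
      rw [Finset.sum_congr rfl fun u _ => (show M.diag u = α from hdiag u)]
      rw [Finset.sum_const, nsmul_eq_mul, Fintype.card]
    have h2 : (0 : ℝ) < (Fintype.card V : ℝ) := by
      have : 0 < Fintype.card V := Fintype.card_pos_iff.mpr ⟨u₀⟩
      exact_mod_cast this
    nlinarith [htrpos, h1]
  set β : ℝ := M u₀ v₀ with hβdef
  have hadjval : ∀ u v : V, G.Adj u v → M u v = β := by
    intro u v h
    exact hMdist u v u₀ v₀ (by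
      rw [SimpleGraph.dist_eq_one_iff_adj.mpr h, SimpleGraph.dist_eq_one_iff_adj.mpr hadj])
  -- k is positive
  have hk : 0 < k := by
    rw [← hreg u₀]
    rw [SimpleGraph.degree_pos_iff_exists_adj]
    exact ⟨v₀, hadj⟩
  -- k * β = s * α
  have hkβ : (k : ℝ) * β = s * α := by
    have h1 : (M * A) u₀ u₀ = s * α := by
      rw [hMA, Matrix.smul_apply, hdiag u₀, smul_eq_mul]
    have h2 : (M * A) u₀ u₀ = (k : ℝ) * β := by
      rw [Matrix.mul_apply]
      rw [← Finset.sum_filter_add_sum_filter_not Finset.univ (fun w => G.Adj w u₀)]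
      have h3 : ∑ w ∈ Finset.univ.filter (fun w => ¬ G.Adj w u₀), M u₀ w * A w u₀ = 0 := by
        apply Finset.sum_eq_zero
        intro w hw
        rw [Finset.mem_filter] at hw
        simp [hAdef, hw.2]
      have h4 : ∀ w ∈ Finset.univ.filter (fun w => G.Adj w u₀), M u₀ w * A w u₀ = β := by
        intro w hw
        rw [Finset.mem_filter] at hw
        rw [hadjval u₀ w hw.2.symm]
        simp [hAdef, hw.2]
      rw [h3, add_zero, Finset.sum_congr rfl h4, Finset.sum_const, nsmul_eq_mul]
      congr 1
      have h5 : Finset.univ.filter (fun w => G.Adj w u₀) = G.neighborFinset u₀ := by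
        ext w
        simp [SimpleGraph.adj_comm]
      rw [h5]
      exact_mod_cast congrArg (Nat.cast (R := ℝ)) (hreg u₀)
    rw [← h1, h2]
  -- s ≤ -1
  have hsneg : s ≤ -1 := by
    have hpsd : (A - s • 1).PosSemidef := by
      have h1 : A - s • 1 = (aeval A) (X - C s) := by
        rw [map_sub, aeval_X, aeval_C, Algebra.algebraMap_eq_smul_one]
      rw [h1, herm_aeval hA, Matrix.star_eq_conjTranspose]
      apply Matrix.PosSemidef.mul_mul_conjTranspose_same
      apply Matrix.PosSemidef.diagonal
      intro i
      simp only [Pi.zero_apply, eval_sub, eval_X, eval_C]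
      have := hge i
      linarith
    have hq := hpsd.dotProduct_mulVec_nonneg (Pi.single u₀ 1 - Pi.single v₀ 1)
    rw [star_trivial] at hq
    have he : (Pi.single u₀ 1 - Pi.single v₀ 1 : V → ℝ) ⬝ᵥ
        ((A - s • 1) *ᵥ (Pi.single u₀ 1 - Pi.single v₀ 1)) = -2 - 2 * s := by
      have hau : A u₀ u₀ = 0 := by simp [hAdef]
      have hav : A v₀ v₀ = 0 := by simp [hAdef]
      have hauv : A u₀ v₀ = 1 := by simp [hAdef, hadj]
      have havu : A v₀ u₀ = 1 := by simp [hAdef, hadj.symm]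
      simp only [Matrix.sub_mulVec, Matrix.smul_mulVec, Matrix.one_mulVec,
        Matrix.mulVec_sub, Matrix.mulVec_single, mul_one, sub_dotProduct,
        single_dotProduct, Pi.sub_apply, Pi.smul_apply, Pi.single_apply,
        smul_eq_mul, hau, hav, hauv, havu]
      simp [huv, Ne.symm huv]
      rw [hau, hav, hauv, havu]
      ring
    rw [he] at hq
    linarith
  -- positivity of the clique quadratic form
  have hquad : 0 ≤ ∑ u ∈ cl, ∑ v ∈ cl, M u v := by
    have hq := hMps.dotProduct_mulVec_nonneg (fun v => if v ∈ cl then (1 : ℝ) else 0)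
    rw [star_trivial] at hq
    have he : (fun v => if v ∈ cl then (1 : ℝ) else 0) ⬝ᵥ
        (M *ᵥ fun v => if v ∈ cl then (1 : ℝ) else 0) = ∑ u ∈ cl, ∑ v ∈ cl, M u v := by
      rw [dotProduct]
      rw [← Finset.sum_filter_add_sum_filter_not Finset.univ (fun u => u ∈ cl)]
      have h1 : ∑ u ∈ Finset.univ.filter (fun u => ¬ u ∈ cl),
          (if u ∈ cl then (1:ℝ) else 0) * (M *ᵥ fun v => if v ∈ cl then (1:ℝ) else 0) u = 0 := by
        apply Finset.sum_eq_zero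
        intro u hu
        rw [Finset.mem_filter] at hu
        rw [if_neg hu.2, zero_mul]
      rw [h1, add_zero]
      have h2 : Finset.univ.filter (fun u => u ∈ cl) = cl := by
        ext u; simp
      rw [h2]
      apply Finset.sum_congr rfl
      intro u hu
      rw [if_pos hu, one_mul, Matrix.mulVec]
      rw [dotProduct]
      rw [← Finset.sum_filter_add_sum_filter_not Finset.univ (fun v => v ∈ cl)]
      have h3 : ∑ v ∈ Finset.univ.filter (fun v => ¬ v ∈ cl),
          M u v * (if v ∈ cl then (1:ℝ) else 0) = 0 := by
        apply Finset.sum_eq_zero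
        intro v hv
        rw [Finset.mem_filter] at hv
        rw [if_neg hv.2, mul_zero]
      have h4 : Finset.univ.filter (fun v => v ∈ cl) = cl := by
        ext v; simp
      rw [h3, add_zero, h4]
      apply Finset.sum_congr rfl
      intro v hv
      rw [if_pos hv, mul_one]
    rw [he] at hq
    exact hq
  -- compute the double sum
  have hsum : ∑ u ∈ cl, ∑ v ∈ cl, M u v =
      (cl.card : ℝ) * α + (cl.card : ℝ) * ((cl.card : ℝ) - 1) * β := by
    have hinner : ∀ u ∈ cl, ∑ v ∈ cl, M u v = α + ((cl.card : ℝ) - 1) * β := by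
      intro u hu
      rw [← Finset.add_sum_erase cl _ hu, hdiag u]
      congr 1
      have hval : ∀ v ∈ cl.erase u, M u v = β := by
        intro v hv
        rw [Finset.mem_erase] at hv
        exact hadjval u v (hcl hu hv.2 (Ne.symm hv.1))
      rw [Finset.sum_congr rfl hval, Finset.sum_const, nsmul_eq_mul,
        Finset.card_erase_of_mem hu]
      congr 1
      have : 1 ≤ cl.card := Finset.card_pos.mpr ⟨u, hu⟩
      push_cast [Nat.cast_sub this]
      ring
    rw [Finset.sum_congr rfl hinner, Finset.sum_const, nsmul_eq_mul]
    ring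
  -- final arithmetic
  have hn : (2 : ℝ) ≤ (cl.card : ℝ) := by exact_mod_cast hn1
  have habs : |s| = -s := abs_of_neg (by linarith : s < 0)
  rw [habs]
  have hkpos : (0 : ℝ) < k := by exact_mod_cast hk
  have hkey : ((cl.card : ℝ) - 1) * (-s) ≤ k := by
    have h1 : 0 ≤ (cl.card : ℝ) * α + (cl.card : ℝ) * ((cl.card : ℝ) - 1) * β := by
      rw [← hsum]; exact hquad
    have h2 : 0 ≤ α + ((cl.card : ℝ) - 1) * β := by
      nlinarith
    have h3 : β = s * α / k := by
      field_simp at hkβ ⊢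
      linarith
    rw [h3] at h2
    have h4 : 0 ≤ α * (k + ((cl.card : ℝ) - 1) * s) := by
      have := mul_le_mul_of_nonneg_left h2 (le_of_lt hkpos)
      field_simp at this
      nlinarith
    nlinarith
  rw [← le_div_iff₀ (by linarith : (0:ℝ) < -s)] at hkey
  linarith
end
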